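/- arXiv:1006.3164 — 7 statements merged into one kernel-verified Lean document; each statement's English description precedes it below -/
import Mathlib

section
/- If g is an asymptotically locally constant function, then for any fixed reals v₁ < v₂, the convergence g(x+v)/g(x) → 1 as x → ∞ is uniform in v ∈ [v₁, v₂]. -/
open Filter MeasureTheory Real Set
open scoped Topology ENNReal

/-!
Pass to `h = log ∘ g`, so that `h (x + v) - h x → 0` for every `v`. If `|h (x + t) - h x| ≥ ε`
for some `t ∈ [a, b]`, then every `s ∈ [t, t + 1]` satisfies `|h (x + s) - h x| ≥ ε / 2` or
`|h ((x + t) + (s - t)) - h (x + t)| ≥ ε / 2`, so one of the two corresponding exceptional sets,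
in `[a, b + 1]` and in `[0, 1]`, has measure at least `1 / 2`. By dominated convergence the
measure of such exceptional sets tends to `0` as the base point tends to infinity, so for large
`x` no such `t` exists.
-/

section Additive

variable {h : ℝ → ℝ}

theorem tendsto_volume_Icc_inter_setOf_le_abs_sub (hm : Measurable h)
    (hc : ∀ v, Tendsto (fun x => h (x + v) - h x) atTop (𝓝 0)) {ε : ℝ} (hε : 0 < ε)
    (a b : ℝ) :
    Tendsto (fun x => volume (Icc a b ∩ {s | ε ≤ |h (x + s) - h x|})) atTop (𝓝 0) := by
  have hmeas : ∀ x, MeasurableSet (Icc a b ∩ {s | ε ≤ |h (x + s) - h x|}) := fun x =>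
    measurableSet_Icc.inter <| measurableSet_le measurable_const
      ((hm.comp (measurable_const.add measurable_id)).sub measurable_const).abs
  have hlim : ∀ s, ∀ᶠ x in atTop,
      s ∈ Icc a b ∩ {s | ε ≤ |h (x + s) - h x|} ↔ s ∈ (∅ : Set ℝ) := fun s => by
    filter_upwards [(hc s).eventually (eventually_abs_sub_lt 0 hε)] with x hx
    simpa using fun _ _ => hx
  simpa using tendsto_measure_of_tendsto_indicator atTop hmeas measurableSet_Icc
    (by simp [Real.volume_Icc]) (Eventually.of_forall fun _ => inter_subset_left) hlim

theorem one_le_volume_add_volume_of_le_abs_sub {ε x t a b : ℝ}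
    (hbad : ε ≤ |h (x + t) - h x|) (ht : t ∈ Icc a b) :
    1 ≤ volume (Icc a (b + 1) ∩ {s | ε / 2 ≤ |h (x + s) - h x|})
      + volume (Icc 0 1 ∩ {u | ε / 2 ≤ |h (x + t + u) - h (x + t)|}) := by
  have hcover : Icc t (t + 1) ⊆ (Icc a (b + 1) ∩ {s | ε / 2 ≤ |h (x + s) - h x|}) ∪
      (fun s => -t + s) ⁻¹' (Icc 0 1 ∩ {u | ε / 2 ≤ |h (x + t + u) - h (x + t)|}) := by
    intro s hs
    by_cases hs' : ε / 2 ≤ |h (x + s) - h x|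
    · exact Or.inl ⟨⟨by linarith [hs.1, ht.1], by linarith [hs.2, ht.2]⟩, hs'⟩
    · refine Or.inr ⟨⟨by linarith [hs.1], by linarith [hs.2]⟩, ?_⟩
      have hshift : x + t + (-t + s) = x + s := by ring
      show ε / 2 ≤ |h (x + t + (-t + s)) - h (x + t)|
      rw [hshift]
      linarith [abs_sub_le (h (x + t)) (h (x + s)) (h x), abs_sub_comm (h (x + s)) (h (x + t))]
  calc (1 : ℝ≥0∞) = volume (Icc t (t + 1)) := by simp [Real.volume_Icc]
    _ ≤ _ := (measure_mono hcover).trans (measure_union_le _ _)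
    _ = _ := by rw [measure_preimage_add]

theorem eventually_forall_Icc_abs_sub_lt (hm : Measurable h)
    (hc : ∀ v, Tendsto (fun x => h (x + v) - h x) atTop (𝓝 0)) {ε : ℝ} (hε : 0 < ε)
    (a b : ℝ) :
    ∀ᶠ x in atTop, ∀ t ∈ Icc a b, |h (x + t) - h x| < ε := by
  have hsmall : ∀ a b : ℝ, ∀ᶠ x in atTop,
      volume (Icc a b ∩ {s | ε / 2 ≤ |h (x + s) - h x|}) < 1 / 2 := fun a b =>
    (tendsto_volume_Icc_inter_setOf_le_abs_sub hm hc (half_pos hε) a b).eventually_lt_const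
      (by norm_num)
  obtain ⟨Y, hY⟩ := eventually_atTop.1 (hsmall 0 1)
  filter_upwards [hsmall a (b + 1), eventually_ge_atTop (Y - a)] with x hx hxY t ht
  by_contra! hbad
  have hlt := ENNReal.add_lt_add hx (hY (x + t) (by linarith [ht.1]))
  rw [ENNReal.add_halves] at hlt
  exact (one_le_volume_add_volume_of_le_abs_sub hbad ht).not_gt hlt

theorem tendsto_sub_atTop_prod_Icc (hm : Measurable h)
    (hc : ∀ v, Tendsto (fun x => h (x + v) - h x) atTop (𝓝 0)) (a b : ℝ) :
    Tendsto (fun p : ℝ × ℝ => h (p.1 + p.2) - h p.1) (atTop ×ˢ 𝓟 (Icc a b)) (𝓝 0) :=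
  Metric.tendsto_nhds.2 fun _ hε => eventually_prod_principal_iff.2 <| by
    simpa [Real.dist_eq] using eventually_forall_Icc_abs_sub_lt hm hc hε a b

end Additive

theorem tendsto_div_atTop_prod_Icc {g : ℝ → ℝ} (hpos : ∀ x, 0 < g x) (hm : Measurable g)
    (hlcf : ∀ v, Tendsto (fun x => g (x + v) / g x) atTop (𝓝 1)) (a b : ℝ) :
    Tendsto (fun p : ℝ × ℝ => g (p.1 + p.2) / g p.1) (atTop ×ˢ 𝓟 (Icc a b)) (𝓝 1) := by
  have hlog : ∀ v, Tendsto (fun x => log (g (x + v)) - log (g x)) atTop (𝓝 0) := fun v => by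
    have hlog_div : ∀ x, log (g (x + v) / g x) = log (g (x + v)) - log (g x) := fun x =>
      log_div (hpos _).ne' (hpos _).ne'
    simpa [Function.comp_def, hlog_div] using (continuousAt_log one_ne_zero).tendsto.comp (hlcf v)
  simpa [Function.comp_def, exp_sub, exp_log (hpos _)] using
    (continuous_exp.tendsto 0).comp (tendsto_sub_atTop_prod_Icc hm.log hlog a b)

/-- Uniform convergence theorem for asymptotically locally constant functions. -/
theorem lcf_uniform_convergence (g : ℝ → ℝ)
    (hg_pos : ∀ x, 0 < g x) (hg_meas : Measurable g)
    (hg_lcf : ∀ v : ℝ, Tendsto (fun x => g (x + v) / g x) atTop (𝓝 1)) :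
    ∀ v₁ v₂ : ℝ, v₁ < v₂ → ∀ ε > 0, ∃ X : ℝ, ∀ x ≥ X,
      ∀ v ∈ Set.Icc v₁ v₂, |g (x + v) / g x - 1| < ε := by
  intro v₁ v₂ _ ε hε
  obtain ⟨X, hX⟩ := eventually_atTop.1 <| eventually_prod_principal_iff.1 <|
    Metric.tendsto_nhds.1 (tendsto_div_atTop_prod_Icc hg_pos hg_meas hg_lcf v₁ v₂) ε hε
  exact ⟨X, fun x hx v hv => by simpa [Real.dist_eq] using hX x hx v hv⟩
end

section
/- A positive measurable function g is an l.c.f. if and only if it admits a representation g(x) = c(x) · exp(∫₁^{e^x} ε(t)/t dt) for x ≥ 1, where c(t) > 0 is measurable with c(t) → c ∈ (0,∞) and ε(t) is measurable with ε(t) → 0 as t → ∞. -/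
/-!
With `f = log g` the hypothesis reads `f (x + v) - f x → 0` for every `v`. For measurable `f`
this convergence is uniform in `v ∈ [0, 1]`: for large `y` the set of `t ∈ [0, 2]` with
`f (y + t) - f y` small has measure close to `2`, so the sets attached to `y = x` and to
`y = x + s` meet after a shift by `s`, which controls `f (x + s) - f x`. Uniformity makes `f`
locally bounded on a half-line `[X, ∞)`, and with `δ u = f (u + 1) - f u` there, telescoping
gives `f x - ∫₀ˣ δ = (f x - ∫ₓ^{x+1} f) + const`, which converges by bounded convergence; the
substitution `t = eᵘ` turns `∫₀ˣ δ` into `∫₁^{eˣ} δ (log t) / t`. Conversely, after the same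
substitution the exponent changes by `∫ₓ^{x+v} ε (eᵘ) du` between `x` and `x + v`, and this
tends to `0` because `ε (eᵘ) → 0`.
-/

open Filter Real MeasureTheory Set
open scoped Topology ENNReal Interval

theorem integral_one_exp_div_eq_integral_comp_exp (h : ℝ → ℝ) {x : ℝ} (hx : 0 ≤ x) :
    ∫ t in (1:ℝ)..exp x, h t / t = ∫ u in (0:ℝ)..x, h (exp u) := by
  rw [intervalIntegral.integral_of_le (one_le_exp hx), intervalIntegral.integral_of_le hx,
    ← exp_zero, ← image_exp_Ioc, integral_image_eq_integral_abs_deriv_smul measurableSet_Ioc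
      (fun u _ => (hasDerivAt_exp u).hasDerivWithinAt) exp_injective.injOn]
  refine setIntegral_congr_fun measurableSet_Ioc fun u _ => ?_
  simp [abs_of_pos (exp_pos u), mul_div_cancel₀ _ (exp_pos u).ne']

theorem exists_notMem_notMem_sub_of_measure_add_lt {G : Type*} [AddGroup G] [MeasurableSpace G]
    [MeasurableAdd G] (μ : Measure G) [μ.IsAddRightInvariant] {A B C : Set G} (g : G)
    (h : μ A + μ B < μ C) : ∃ t ∈ C, t ∉ A ∧ t - g ∉ B := by
  by_contra! hC
  have hsub : C ⊆ A ∪ (fun t => t + -g) ⁻¹' B := fun t ht => by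
    by_cases htA : t ∈ A
    · exact Or.inl htA
    · exact Or.inr (by simpa [sub_eq_add_neg] using hC t ht htA)
  have := (measure_mono (μ := μ) hsub).trans (measure_union_le _ _)
  rw [measure_preimage_add_right] at this
  exact this.not_gt h

theorem tendsto_intervalIntegral_of_tendsto_zero_of_abs_le {F : ℝ → ℝ → ℝ} {a b C : ℝ}
    (hmeas : ∀ x, Measurable (F x)) (hbound : ∀ᶠ x in atTop, ∀ s ∈ Ι a b, |F x s| ≤ C)
    (hlim : ∀ s, Tendsto (fun x => F x s) atTop (𝓝 0)) :
    Tendsto (fun x => ∫ s in a..b, F x s) atTop (𝓝 0) := by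
  simpa using intervalIntegral.tendsto_integral_filter_of_dominated_convergence (fun _ => C)
    (Eventually.of_forall fun x => (hmeas x).aestronglyMeasurable)
    (hbound.mono fun x hx => ae_of_all _ (hx ·)) intervalIntegrable_const
    (ae_of_all _ fun s _ => hlim s)

section AdditiveIncrements

variable {f : ℝ → ℝ}

theorem tendsto_volume_inter_setOf_le_abs_add_sub (hf : Measurable f)
    (h : ∀ v, Tendsto (fun x => f (x + v) - f x) atTop (𝓝 0)) {s : Set ℝ}
    (hs : volume s ≠ ∞) {ε : ℝ} (hε : 0 < ε) :
    Tendsto (fun x => volume ({t | ε ≤ |f (x + t) - f x|} ∩ s)) atTop (𝓝 0) := by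
  have : IsFiniteMeasure (volume.restrict s) := isFiniteMeasure_restrict.mpr hs
  have hmeas : ∀ x, Measurable fun t => f (x + t) - f x := fun x =>
    (hf.comp (measurable_const_add x)).sub_const _
  refine tendsto_iff_seq_tendsto.mpr fun y hy => ?_
  have := tendstoInMeasure_iff_dist.mp (tendstoInMeasure_of_tendsto_ae (μ := volume.restrict s)
    (fun n => (hmeas (y n)).aestronglyMeasurable) (ae_of_all _ fun t => (h t).comp hy)) ε hε
  refine this.congr fun n => ?_
  simp only [dist_zero_right, Real.norm_eq_abs, Function.comp_apply]
  exact Measure.restrict_apply (measurableSet_le measurable_const (hmeas (y n)).abs)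

theorem tendstoUniformlyOn_Icc_of_tendsto_add_sub (hf : Measurable f)
    (h : ∀ v, Tendsto (fun x => f (x + v) - f x) atTop (𝓝 0)) :
    TendstoUniformlyOn (fun x s => f (x + s) - f x) 0 atTop (Icc 0 1) := by
  rw [Metric.tendstoUniformlyOn_iff]
  intro ε hε
  have hsmall := (tendsto_volume_inter_setOf_le_abs_add_sub hf h (s := Icc 0 2)
    (by simp [Real.volume_Icc]) (half_pos hε)).eventually_lt_const
    (show (0 : ℝ≥0∞) < 1 / 2 by norm_num)
  obtain ⟨X, hX⟩ := eventually_atTop.mp hsmall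
  filter_upwards [eventually_ge_atTop X] with x hx s hs
  have hvol : volume ({t | ε / 2 ≤ |f (x + t) - f x|} ∩ Icc 0 2) +
      volume ({t | ε / 2 ≤ |f (x + s + t) - f (x + s)|} ∩ Icc 0 2) <
        volume (Icc (1:ℝ) 2) := by
    calc _ < (1 / 2 + 1 / 2 : ℝ≥0∞) :=
          ENNReal.add_lt_add (hX x hx) (hX _ (by linarith [hs.1]))
      _ = volume (Icc (1:ℝ) 2) := by rw [ENNReal.add_halves, Real.volume_Icc]; norm_num
  obtain ⟨t, ht, htA, htB⟩ := exists_notMem_notMem_sub_of_measure_add_lt volume s hvol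
  have h₁ : |f (x + t) - f x| < ε / 2 := by
    by_contra! hle; exact htA ⟨hle, by linarith [ht.1], ht.2⟩
  have h₂ : |f (x + t) - f (x + s)| < ε / 2 := by
    by_contra! hle
    exact htB ⟨by simpa using hle, by linarith [ht.1, hs.2], by linarith [ht.2, hs.1]⟩
  rw [Pi.zero_apply, dist_zero_left, Real.norm_eq_abs]
  calc |f (x + s) - f x| ≤ |f (x + t) - f (x + s)| + |f (x + t) - f x| := by
        rw [abs_sub_comm (f (x + t))]; exact abs_sub_le _ _ _
    _ < ε := by linarith

theorem abs_sub_le_of_abs_add_sub_le {a C : ℝ}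
    (h : ∀ x ≥ a, ∀ s ∈ Icc (0:ℝ) 1, |f (x + s) - f x| ≤ C) (n : ℕ) :
    ∀ x ∈ Icc a (a + n), |f x - f a| ≤ n * C := by
  induction n with
  | zero => intro x hx; simp [le_antisymm (by simpa using hx.2) hx.1]
  | succ n ih =>
    intro x ⟨hax, hxn⟩
    have hC : 0 ≤ C := (abs_nonneg _).trans (h a le_rfl 0 (by simp))
    rcases le_or_gt x (a + n) with hx | hx
    · exact (ih x ⟨hax, hx⟩).trans (by push_cast; nlinarith)
    · have hstep :=
        h (a + n) (by simp) (x - (a + n)) ⟨by linarith, by push_cast at hxn; linarith⟩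
      rw [add_sub_cancel] at hstep
      calc |f x - f a| ≤ |f x - f (a + n)| + |f (a + n) - f a| := abs_sub_le _ _ _
        _ ≤ C + n * C := add_le_add hstep (ih _ ⟨by simp, le_rfl⟩)
        _ = (n + 1 : ℕ) * C := by push_cast; ring

theorem intervalIntegrable_of_abs_add_sub_le (hf : Measurable f) {a C : ℝ}
    (h : ∀ x ≥ a, ∀ s ∈ Icc (0:ℝ) 1, |f (x + s) - f x| ≤ C) {b c : ℝ} (hb : a ≤ b)
    (hc : a ≤ c) :
    IntervalIntegrable f volume b c := by
  set n := ⌈max b c - a⌉₊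
  refine (intervalIntegrable_const (c := |f a| + n * C)).mono_fun' hf.aestronglyMeasurable
    (ae_restrict_of_forall_mem measurableSet_uIoc fun x hx => ?_)
  have hx' := uIoc_subset_uIcc hx
  have hx : x ∈ Icc a (a + n) :=
    ⟨(le_min hb hc).trans hx'.1, hx'.2.trans (by linarith [Nat.le_ceil (max b c - a)])⟩
  have := abs_sub_le_of_abs_add_sub_le h n x hx
  change |f x| ≤ _
  linarith [abs_sub_abs_le_abs_sub (f x) (f a)]

theorem integral_comp_add_sub_eq {a x d : ℝ} (h₁ : IntervalIntegrable f volume (a + d) (x + d))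
    (h₂ : IntervalIntegrable f volume a x) (h₃ : IntervalIntegrable f volume (a + d) a) :
    ∫ u in a..x, (f (u + d) - f u) = (∫ u in x..x + d, f u) - ∫ u in a..a + d, f u := by
  rw [intervalIntegral.integral_sub (by simpa using h₁.comp_add_right d) h₂,
    intervalIntegral.integral_comp_add_right,
    intervalIntegral.integral_interval_sub_interval_comm' h₁ h₂ h₃]

theorem exists_tendsto_sub_integral_of_tendsto_add_sub (hf : Measurable f)
    (h : ∀ v, Tendsto (fun x => f (x + v) - f x) atTop (𝓝 0)) :
    ∃ δ : ℝ → ℝ, Measurable δ ∧ (∀ a b, IntervalIntegrable δ volume a b) ∧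
      Tendsto δ atTop (𝓝 0) ∧
        ∃ K, Tendsto (fun x => f x - ∫ u in (0:ℝ)..x, δ u) atTop (𝓝 K) := by
  obtain ⟨X, hX⟩ : ∃ X, ∀ x ≥ X, ∀ s ∈ Icc (0:ℝ) 1, |f (x + s) - f x| ≤ 1 := by
    obtain ⟨X, hX⟩ := eventually_atTop.mp (Metric.tendstoUniformlyOn_iff.mp
      (tendstoUniformlyOn_Icc_of_tendsto_add_sub hf h) 1 one_pos)
    refine ⟨X, fun x hx s hs => ?_⟩
    have := hX x hx s hs
    rw [Pi.zero_apply, dist_zero_left, Real.norm_eq_abs] at this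
    exact this.le
  have hloc {b c : ℝ} (hb : X ≤ b) (hc : X ≤ c) : IntervalIntegrable f volume b c :=
    intervalIntegrable_of_abs_add_sub_le hf hX hb hc
  -- cut off below `X`, where `f` need not be locally integrable
  set δ := (Ioi X).indicator fun u => f (u + 1) - f u
  have hδ_meas : Measurable δ :=
    ((hf.comp (measurable_add_const 1)).sub hf).indicator measurableSet_Ioi
  have hδ_int (a b : ℝ) : IntervalIntegrable δ volume a b :=
    (intervalIntegrable_const (c := 1)).mono_fun' hδ_meas.aestronglyMeasurable
      (ae_of_all _ fun u => by
        by_cases hu : u ∈ Ioi X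
        · simpa [δ, hu] using hX u (le_of_lt hu) 1 (by simp)
        · simp [δ, hu])
  refine ⟨δ, hδ_meas, hδ_int, (h 1).congr' ?_, ?_⟩
  · filter_upwards [eventually_gt_atTop X] with u hu
    simp [δ, hu]
  have hδ_eq {x : ℝ} (hx : X ≤ x) :
      ∫ u in X..x, δ u = (∫ u in x..x + 1, f u) - ∫ u in X..X + 1, f u := by
    rw [← integral_comp_add_sub_eq (hloc (by linarith) (by linarith)) (hloc le_rfl hx)
      (hloc (by linarith) le_rfl)]
    refine intervalIntegral.integral_congr_ae (ae_of_all _ fun u hu => ?_)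
    rw [uIoc_of_le hx] at hu
    simp [δ, hu.1]
  have hmean : Tendsto (fun x => ∫ s in (0:ℝ)..1, (f (x + s) - f x)) atTop (𝓝 0) :=
    tendsto_intervalIntegral_of_tendsto_zero_of_abs_le
      (fun x => (hf.comp (measurable_const_add x)).sub_const _)
      (eventually_ge_atTop X |>.mono fun x hx s hs =>
        hX x hx s (by rw [uIoc_of_le zero_le_one] at hs; exact ⟨hs.1.le, hs.2⟩)) h
  refine ⟨(∫ u in X..X + 1, f u) - ∫ u in (0:ℝ)..X, δ u, ?_⟩
  have := hmean.neg.add_const ((∫ u in X..X + 1, f u) - ∫ u in (0:ℝ)..X, δ u)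
  rw [neg_zero, zero_add] at this
  refine this.congr' ?_
  filter_upwards [eventually_ge_atTop X] with x hx
  have hshift : ∫ s in (0:ℝ)..1, (f (x + s) - f x) = (∫ u in x..x + 1, f u) - f x := by
    have hint : IntervalIntegrable (fun s => f (x + s)) volume 0 1 := by
      simpa using (hloc (c := x + 1) hx (by linarith)).comp_add_left x
    rw [intervalIntegral.integral_sub hint intervalIntegrable_const,
      intervalIntegral.integral_comp_add_left]
    simp
  rw [← intervalIntegral.integral_add_adjacent_intervals (hδ_int 0 X) (hδ_int X x), hδ_eq hx,
    hshift]
  ring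

end AdditiveIncrements

theorem tendsto_integral_add_sub_integral {η : ℝ → ℝ} (hη_meas : Measurable η)
    (hη : Tendsto η atTop (𝓝 0)) (a v : ℝ) :
    Tendsto (fun x => (∫ u in a..x + v, η u) - ∫ u in a..x, η u) atTop (𝓝 0) := by
  obtain ⟨T, hT⟩ := eventually_atTop.mp (hη.eventually (Metric.closedBall_mem_nhds 0 one_pos))
  have hbound {u : ℝ} (hu : T ≤ u) : |η u| ≤ 1 := by simpa using hT u hu
  have hloc {b c : ℝ} (hb : T ≤ b) (hc : T ≤ c) : IntervalIntegrable η volume b c :=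
    (intervalIntegrable_const (c := 1)).mono_fun' hη_meas.aestronglyMeasurable
      ((ae_restrict_iff' measurableSet_uIoc).mpr (ae_of_all _ fun u hu =>
        hbound ((le_min hb hc).trans (uIoc_subset_uIcc hu).1)))
  by_cases hint : IntervalIntegrable η volume a T
  · have hshift : Tendsto (fun x => ∫ s in (0:ℝ)..v, η (x + s)) atTop (𝓝 0) :=
      tendsto_intervalIntegral_of_tendsto_zero_of_abs_le
        (fun x => hη_meas.comp (measurable_const_add x))
        ((eventually_ge_atTop (T + |v|)).mono fun x hx s hs => hbound (by
          have := uIoc_subset_uIcc hs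
          rw [mem_uIcc] at this
          rcases this with h | h <;> linarith [neg_abs_le v, le_abs_self v]))
        (fun s => hη.comp (tendsto_atTop_add_const_right _ s tendsto_id))
    refine hshift.congr' ?_
    filter_upwards [eventually_ge_atTop (T + |v|)] with x hx
    rw [intervalIntegral.integral_interval_sub_left
        (hint.trans (hloc le_rfl (by linarith [neg_abs_le v])))
        (hint.trans (hloc le_rfl (by linarith [abs_nonneg v]))),
      intervalIntegral.integral_comp_add_left, add_zero]
  · -- both integrals are the junk value `0` once `x` and `x + v` exceed `T`
    have hundef {b : ℝ} (hb : T ≤ b) : ∫ u in a..b, η u = 0 :=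
      intervalIntegral.integral_undef fun hab => hint (hab.trans (hloc hb le_rfl))
    refine tendsto_const_nhds.congr' ?_
    filter_upwards [eventually_ge_atTop (T + |v|)] with x hx
    rw [hundef (by linarith [neg_abs_le v]), hundef (by linarith [abs_nonneg v]), sub_zero]

theorem tendsto_div_of_integral_representation {g c ε : ℝ → ℝ} {c₀ : ℝ}
    (hε_meas : Measurable ε) (hc₀ : c₀ ≠ 0) (hc : Tendsto c atTop (𝓝 c₀))
    (hε : Tendsto ε atTop (𝓝 0))
    (hg : ∀ x ≥ (1 : ℝ), g x = c x * exp (∫ t in (1:ℝ)..exp x, ε t / t)) (v : ℝ) :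
    Tendsto (fun x => g (x + v) / g x) atTop (𝓝 1) := by
  set H := fun x => ∫ u in (0:ℝ)..x, ε (exp u)
  have hlim : Tendsto (fun x => c (x + v) / c x * exp (H (x + v) - H x)) atTop
      (𝓝 (c₀ / c₀ * exp 0)) :=
    ((hc.comp (tendsto_atTop_add_const_right _ v tendsto_id)).div hc hc₀).mul
      ((continuous_exp.tendsto 0).comp (tendsto_integral_add_sub_integral
        (hε_meas.comp measurable_exp) (hε.comp tendsto_exp_atTop) 0 v))
  rw [div_self hc₀, exp_zero, mul_one] at hlim
  refine hlim.congr' ?_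
  filter_upwards [eventually_ge_atTop 1, eventually_ge_atTop (1 - v)] with x hx hxv
  rw [hg x hx, hg (x + v) (by linarith),
    integral_one_exp_div_eq_integral_comp_exp _ (by linarith),
    integral_one_exp_div_eq_integral_comp_exp _ (by linarith), exp_sub, mul_div_mul_comm]

/-- Integral representation theorem for asymptotically locally constant functions. -/
theorem lcf_integral_representation (g : ℝ → ℝ)
    (hg_pos : ∀ x, 0 < g x) (hg_meas : Measurable g) :
    (∀ v : ℝ, Tendsto (fun x => g (x + v) / g x) atTop (𝓝 1)) ↔
      ∃ (c ε : ℝ → ℝ) (c₀ : ℝ), Measurable c ∧ Measurable ε ∧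
        (∀ t, 0 < c t) ∧ 0 < c₀ ∧
        Tendsto c atTop (𝓝 c₀) ∧ Tendsto ε atTop (𝓝 0) ∧
        ∀ x ≥ (1 : ℝ),
          g x = c x * Real.exp (∫ t in (1:ℝ)..(Real.exp x), ε t / t) := by
  constructor
  · intro hlcf
    have hlog (v : ℝ) : Tendsto (fun x => log (g (x + v)) - log (g x)) atTop (𝓝 0) := by
      rw [← log_one]
      exact ((continuousAt_log one_ne_zero).tendsto.comp (hlcf v)).congr fun x =>
        log_div (hg_pos _).ne' (hg_pos _).ne'
    obtain ⟨δ, hδ_meas, hδ_int, hδ, K, hK⟩ :=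
      exists_tendsto_sub_integral_of_tendsto_add_sub (measurable_log.comp hg_meas) hlog
    have hD : Continuous fun x => ∫ u in (0:ℝ)..x, δ u :=
      intervalIntegral.continuous_primitive hδ_int 0
    refine ⟨fun x => exp (log (g x) - ∫ u in (0:ℝ)..x, δ u), fun t => δ (log t), exp K,
      measurable_exp.comp ((measurable_log.comp hg_meas).sub hD.measurable),
      hδ_meas.comp measurable_log, fun _ => exp_pos _, exp_pos K,
      (continuous_exp.tendsto K).comp hK, hδ.comp tendsto_log_atTop, fun x hx => ?_⟩
    rw [integral_one_exp_div_eq_integral_comp_exp _ (by linarith), ← exp_add]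
    simp [exp_log (hg_pos x)]
  · rintro ⟨c, ε, c₀, -, hε_meas, -, hc₀, hc, hε, hg⟩
    exact tendsto_div_of_integral_representation hε_meas hc₀.ne' hc hε hg
end

section
/- A positive measurable function g is an l.c.f. if and only if for every v ∈ ℝ and every function v(x) → v as x → ∞, one has g(x + v(x))/g(x) → 1 as x → ∞. -/
open Filter Real MeasureTheory Set
open scoped Topology Pointwise

/-!
Taking logarithms, it suffices to show that if `h` is measurable and `h (x + t) - h x → 0` for
every fixed `t`, then `h (x + w x) - h x → 0` whenever `w x → v`. Writing
`w x = v + δ x` with `δ x → 0` reduces this to small shifts, checked along sequences `u n → ∞`.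
By Egorov's theorem, `h (u n + t) - h (u n)` and `h (u n + δ n + t) - h (u n + δ n)` tend to `0`
uniformly for `t` in a set `E` of positive measure, and by Steinhaus' theorem
`δ n = s - s'` with `s, s' ∈ E` for large `n`. Then
`h (u n + δ n) - h (u n) = (h (u n + s) - h (u n)) - (h (u n + δ n + s') - h (u n + δ n))`
is small.
-/

theorem exists_measure_pos_tendstoUniformlyOn {β : Type*} [PseudoMetricSpace β]
    {F : ℕ → ℝ → β} {f : ℝ → β} (hF : ∀ n, StronglyMeasurable (F n))
    (hf : StronglyMeasurable f) (hlim : ∀ t, Tendsto (fun n => F n t) atTop (𝓝 (f t))) :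
    ∃ E, MeasurableSet E ∧ 0 < volume E ∧ TendstoUniformlyOn F f atTop E := by
  obtain ⟨t, -, htm, htμ, hunif⟩ := tendstoUniformlyOn_of_ae_tendsto (μ := volume) hF hf
    (measurableSet_Icc (a := (0 : ℝ)) (b := 1)) measure_Icc_lt_top.ne
    (ae_of_all _ fun t _ => hlim t) (by norm_num : (0 : ℝ) < 1 / 2)
  refine ⟨Icc 0 1 \ t, measurableSet_Icc.diff htm, ?_, hunif⟩
  have ht_lt : volume t < volume (Icc (0 : ℝ) 1) := by
    rw [Real.volume_Icc]
    exact htμ.trans_lt (ENNReal.ofReal_lt_ofReal_iff'.mpr (by norm_num))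
  exact (tsub_pos_of_lt ht_lt).trans_le le_measure_sdiff

section ShiftedDifferences

variable {h : ℝ → ℝ}

theorem tendsto_add_sub_of_tendsto_zero (hh : Measurable h)
    (H : ∀ t, Tendsto (fun x => h (x + t) - h x) atTop (𝓝 0))
    {u δ : ℕ → ℝ} (hu : Tendsto u atTop atTop) (hδ : Tendsto δ atTop (𝓝 0)) :
    Tendsto (fun n => h (u n + δ n) - h (u n)) atTop (𝓝 0) := by
  set F : ℕ → ℝ → ℝ := fun n t =>
    |h (u n + t) - h (u n)| + |h (u n + δ n + t) - h (u n + δ n)|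
  have hF : ∀ n, StronglyMeasurable (F n) := fun n =>
    (((hh.comp (measurable_const_add _)).sub_const _).abs.add
      ((hh.comp (measurable_const_add _)).sub_const _).abs).stronglyMeasurable
  have hlim : ∀ t, Tendsto (fun n => F n t) atTop (𝓝 0) := fun t => by
    simpa using ((H t).comp hu).abs.add ((H t).comp (hu.atTop_add hδ)).abs
  obtain ⟨E, hEm, hEpos, hunif⟩ :=
    exists_measure_pos_tendstoUniformlyOn hF stronglyMeasurable_const hlim
  have hsteinhaus : ∀ᶠ n in atTop, δ n ∈ E - E :=
    hδ (Measure.sub_mem_nhds_zero_of_addHaar_pos volume E hEm hEpos)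
  rw [Metric.tendstoUniformlyOn_iff] at hunif
  rw [Metric.tendsto_nhds]
  intro ε hε
  filter_upwards [hsteinhaus, hunif (ε / 2) (half_pos hε)] with n ⟨s, hs, s', hs', hδn⟩ hsmall
  have hF_lt : ∀ t ∈ E, F n t < ε / 2 := fun t ht => by
    have := hsmall t ht
    rwa [dist_zero_left, norm_of_nonneg (by positivity)] at this
  have h₁ : |h (u n + s) - h (u n)| < ε / 2 := by
    linarith [hF_lt s hs, abs_nonneg (h (u n + δ n + s) - h (u n + δ n))]
  have h₂ : |h (u n + δ n + s') - h (u n + δ n)| < ε / 2 := by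
    linarith [hF_lt s' hs', abs_nonneg (h (u n + s') - h (u n))]
  have hsplit : h (u n + δ n) - h (u n)
      = (h (u n + s) - h (u n)) - (h (u n + δ n + s') - h (u n + δ n)) := by
    rw [← hδn, show u n + (s - s') + s' = u n + s by ring]
    ring
  rw [dist_zero_right, norm_eq_abs, hsplit]
  calc _ ≤ |h (u n + s) - h (u n)| + |h (u n + δ n + s') - h (u n + δ n)| := abs_sub _ _
    _ < ε := by linarith

theorem tendsto_add_sub_of_tendsto (hh : Measurable h)
    (H : ∀ t, Tendsto (fun x => h (x + t) - h x) atTop (𝓝 0))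
    {v : ℝ} {w : ℝ → ℝ} (hw : Tendsto w atTop (𝓝 v)) :
    Tendsto (fun x => h (x + w x) - h x) atTop (𝓝 0) := by
  refine tendsto_iff_seq_tendsto.mpr fun u hu => ?_
  have hsmall := tendsto_add_sub_of_tendsto_zero hh H (u := fun n => u n + v)
    (δ := fun n => w (u n) - v) (tendsto_atTop_add_const_right _ v hu)
    (by simpa using (hw.comp hu).sub_const v)
  simpa [Function.comp_def] using hsmall.add ((H v).comp hu)

end ShiftedDifferences

theorem tendsto_div_nhds_one_iff_tendsto_log_sub {α : Type*} {l : Filter α} {a b : α → ℝ}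
    (ha : ∀ x, 0 < a x) (hb : ∀ x, 0 < b x) :
    Tendsto (fun x => a x / b x) l (𝓝 1) ↔ Tendsto (fun x => log (a x) - log (b x)) l (𝓝 0) := by
  simp_rw [← log_div (ha _).ne' (hb _).ne']
  constructor
  · intro hab
    simpa [Function.comp_def] using (continuousAt_log one_ne_zero).tendsto.comp hab
  · intro hlog
    simpa [Function.comp_def, exp_log (div_pos (ha _) (hb _))] using
      (continuous_exp.tendsto 0).comp hlog

/-- `g` is an l.c.f. iff `g (x + v x) / g x → 1` for every function `v x → v`. -/
theorem lcf_iff_moving_shift (g : ℝ → ℝ)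
    (hg_pos : ∀ x, 0 < g x) (hg_meas : Measurable g) :
    (∀ v : ℝ, Tendsto (fun x => g (x + v) / g x) atTop (𝓝 1)) ↔
      (∀ (v : ℝ) (vf : ℝ → ℝ), Tendsto vf atTop (𝓝 v) →
        Tendsto (fun x => g (x + vf x) / g x) atTop (𝓝 1)) := by
  have hlog : ∀ a : ℝ → ℝ, Tendsto (fun x => g (a x) / g x) atTop (𝓝 1) ↔
      Tendsto (fun x => log (g (a x)) - log (g x)) atTop (𝓝 0) := fun a =>
    tendsto_div_nhds_one_iff_tendsto_log_sub (fun _ => hg_pos _) hg_pos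
  refine ⟨fun H v vf hvf => ?_, fun H v => H v (fun _ => v) tendsto_const_nhds⟩
  rw [hlog]
  exact tendsto_add_sub_of_tendsto (measurable_log.comp hg_meas) (fun t => (hlog _).mp (H t)) hvf
end

section
/- If ψ ∈ 𝒦 (i.e. ψ ≥ 1 is non-decreasing, ψ(x)=o(x), satisfies condition (A) with ∫₀^∞ a(u)du = ∞) and g is a ψ-l.c.f., then the convergence g(x + vψ(x))/g(x) → 1 is uniform in v on any compact interval [v₁, v₂]. -/
/-!
This is the Egorov-type argument behind Karamata's uniform convergence theorem, written additively
for `H = log g`. Take `x_n → ∞`, `v_n` bounded and `z_n = x_n + v_n ψ(x_n)`. Pointwise convergence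
of the increments implies convergence in measure on bounded intervals, so the parameters `t` for
which `H(x_n + t ψ(x_n)) - H(x_n)` is large form a set of small measure, and likewise at `z_n`.
Condition (A) keeps `ψ(x_n) / ψ(z_n)` between two positive constants, so the affine change of
parameter `w = (t - v_n) ψ(x_n) / ψ(z_n)`, for which `x_n + t ψ(x_n) = z_n + w ψ(z_n)`, distorts
measure only boundedly. Hence some `t` is good for both base points, and
the triangle inequality through `x_n + t ψ(x_n)` bounds `H(z_n) - H(x_n)`.
-/

open Filter Real MeasureTheory Set
open scoped Topology

theorem exists_mem_Icc_notMem_of_volume_lt {A B : Set ℝ} {u ρ : ℝ} (hρ : 0 < ρ)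
    (hA : volume A < 1) (hB : volume B < ENNReal.ofReal ρ) :
    ∃ s ∈ Icc u (u + 2), s ∉ A ∧ (s - u) * ρ ∉ B := by
  have hB' : volume ((fun s => (s - u) * ρ) ⁻¹' B) < 1 := by
    have hpre : (fun s => (s - u) * ρ) ⁻¹' B = (· + -u) ⁻¹' ((· * ρ) ⁻¹' B) := by
      ext; simp [sub_eq_add_neg]
    rw [hpre, measure_preimage_add_right, Real.volume_preimage_mul_right hρ.ne',
      abs_of_pos (inv_pos.2 hρ)]
    calc ENNReal.ofReal ρ⁻¹ * volume B < ENNReal.ofReal ρ⁻¹ * ENNReal.ofReal ρ :=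
          ENNReal.mul_lt_mul_right (by simpa using hρ) ENNReal.ofReal_ne_top hB
      _ = 1 := by rw [← ENNReal.ofReal_mul (by positivity), inv_mul_cancel₀ hρ.ne',
          ENNReal.ofReal_one]
  by_contra! h
  have hcover : Icc u (u + 2) ⊆ A ∪ (fun s => (s - u) * ρ) ⁻¹' B := fun s hs =>
    or_iff_not_imp_left.2 (h s hs)
  have hle := (measure_mono (μ := volume) hcover).trans (measure_union_le _ _)
  rw [Real.volume_Icc, add_sub_cancel_left] at hle
  have : ENNReal.ofReal 2 < 1 + 1 := hle.trans_lt (ENNReal.add_lt_add hA hB')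
  norm_num at this

section

variable {ψ : ℝ → ℝ}

theorem tendsto_sub_const_mul_atTop (hψ_small : Tendsto (fun x => ψ x / x) atTop (𝓝 0))
    (V : ℝ) : Tendsto (fun x => x - V * ψ x) atTop atTop := by
  have h : Tendsto (fun x => 1 - V * (ψ x / x)) atTop (𝓝 1) := by
    simpa using tendsto_const_nhds.sub (hψ_small.const_mul V)
  refine (Tendsto.atTop_mul_pos one_pos tendsto_id h).congr' ?_
  filter_upwards [eventually_ne_atTop 0] with x hx
  field_simp
  rfl

theorem eventually_forall_abs_le_comparable (hψ_nonneg : ∀ x, 0 ≤ ψ x) (hψ_mono : Monotone ψ)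
    (hψ_small : Tendsto (fun x => ψ x / x) atTop (𝓝 0)) {V c : ℝ}
    (hA : ∀ᶠ x in atTop, c * ψ x ≤ ψ (x - V * ψ x)) :
    ∀ᶠ x in atTop, ∀ v, |v| ≤ V →
      c * ψ (x + v * ψ x) ≤ ψ x ∧ c * ψ x ≤ ψ (x + v * ψ x) := by
  obtain ⟨X, hX⟩ := eventually_atTop.1 hA
  filter_upwards [(tendsto_sub_const_mul_atTop hψ_small V).eventually_ge_atTop X] with x hx v hv
  set z := x + v * ψ x
  obtain ⟨hVv, hvV⟩ := abs_le.1 hv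
  have hψx := hψ_nonneg x
  have hψz := hψ_nonneg z
  have hx_sub_le_z : x - V * ψ x ≤ z := by nlinarith
  have hz_sub_le_x : z - V * ψ z ≤ x := by
    rcases le_or_gt v 0 with hv0 | hv0
    · nlinarith
    · have := hψ_mono (show x ≤ z by nlinarith)
      nlinarith
  exact ⟨(hX z (hx.trans hx_sub_le_z)).trans (hψ_mono hz_sub_le_x),
    (hX x (hx.trans (by nlinarith))).trans (hψ_mono hx_sub_le_z)⟩

variable {H : ℝ → ℝ}

theorem tendsto_volume_setOf_le_abs_sub (hH : Measurable H)
    (hlim : ∀ v, Tendsto (fun x => H (x + v * ψ x) - H x) atTop (𝓝 0))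
    {y : ℕ → ℝ} (hy : Tendsto y atTop atTop) (a b : ℝ) {ε : ℝ} (hε : 0 < ε) :
    Tendsto (fun n => volume ({t | ε ≤ |H (y n + t * ψ (y n)) - H (y n)|} ∩ Icc a b))
      atTop (𝓝 0) := by
  have : IsFiniteMeasure (volume.restrict (Icc a b)) :=
    isFiniteMeasure_restrict.2 measure_Icc_lt_top.ne
  have hconv := tendstoInMeasure_of_tendsto_ae (μ := volume.restrict (Icc a b))
    (f := fun n t => H (y n + t * ψ (y n)) - H (y n)) (g := 0)
    (fun n => ((hH.comp (measurable_const.add (measurable_id.mul_const _))).sub_const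
      _).aestronglyMeasurable)
    (ae_of_all _ fun t => (hlim t).comp hy)
  simpa [Measure.restrict_apply' measurableSet_Icc, Real.dist_eq] using
    tendstoInMeasure_iff_dist.1 hconv ε hε

theorem tendsto_add_mul_sub_of_abs_le (hψ_pos : ∀ x, 0 < ψ x) (hψ_mono : Monotone ψ)
    (hψ_small : Tendsto (fun x => ψ x / x) atTop (𝓝 0)) {V c : ℝ} (hc : 0 < c)
    (hA : ∀ᶠ x in atTop, c * ψ x ≤ ψ (x - V * ψ x)) (hH : Measurable H)
    (hlim : ∀ v, Tendsto (fun x => H (x + v * ψ x) - H x) atTop (𝓝 0))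
    {x v : ℕ → ℝ} (hx : Tendsto x atTop atTop) (hv : ∀ᶠ n in atTop, |v n| ≤ V) :
    Tendsto (fun n => H (x n + v n * ψ (x n)) - H (x n)) atTop (𝓝 0) := by
  set z : ℕ → ℝ := fun n => x n + v n * ψ (x n)
  have hz : Tendsto z atTop atTop := by
    refine tendsto_atTop_mono' _ ?_ ((tendsto_sub_const_mul_atTop hψ_small V).comp hx)
    filter_upwards [hv] with n hn
    simp only [Function.comp_apply, z]
    nlinarith [neg_le_of_abs_le hn, hψ_pos (x n)]
  have hcomparable := hx.eventually
    (eventually_forall_abs_le_comparable (fun x => (hψ_pos x).le) hψ_mono hψ_small hA)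
  refine Metric.tendsto_nhds.2 fun δ hδ => ?_
  -- The parameter `s` will range over `[v n, v n + 2] ⊆ [-V, V + 2]`, and `(s - v n) * ρ` over
  -- `[0, 2 * ρ] ⊆ [0, 2 * c⁻¹]`.
  have hE := tendsto_volume_setOf_le_abs_sub hH hlim hx (-V) (V + 2) (half_pos hδ)
  have hF := tendsto_volume_setOf_le_abs_sub hH hlim hz 0 (2 * c⁻¹) (half_pos hδ)
  filter_upwards [hv, hcomparable, hE.eventually_lt_const one_pos,
    hF.eventually_lt_const (ENNReal.ofReal_pos.2 hc)] with n hvn hcomp hEn hFn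
  obtain ⟨hzx, hxz⟩ := hcomp (v n) hvn
  set ρ := ψ (x n) / ψ (z n)
  have hρ : 0 < ρ := div_pos (hψ_pos _) (hψ_pos _)
  have hcρ : c ≤ ρ := (le_div_iff₀ (hψ_pos _)).2 hzx
  have hρc : ρ ≤ c⁻¹ := by
    rw [div_le_iff₀ (hψ_pos _), inv_mul_eq_div, le_div_iff₀' hc]
    exact hxz
  obtain ⟨s, ⟨hs₁, hs₂⟩, hsE, hsF⟩ := exists_mem_Icc_notMem_of_volume_lt (u := v n) hρ hEn
    (hFn.trans_le (ENNReal.ofReal_le_ofReal hcρ))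
  have hy : z n + (s - v n) * ρ * ψ (z n) = x n + s * ψ (x n) := by
    simp only [ρ, z]
    field_simp [(hψ_pos (x n + v n * ψ (x n))).ne']
    ring
  have hsx : |H (x n + s * ψ (x n)) - H (x n)| < δ / 2 := by
    obtain ⟨hV₁, hV₂⟩ := abs_le.1 hvn
    by_contra h
    exact hsE ⟨not_lt.1 h, by linarith, by linarith⟩
  have hsz : |H (x n + s * ψ (x n)) - H (z n)| < δ / 2 := by
    rw [← hy]
    by_contra h
    exact hsF ⟨not_lt.1 h, mul_nonneg (by linarith) hρ.le,
      mul_le_mul (by linarith) hρc hρ.le zero_le_two⟩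
  rw [Real.dist_0_eq_abs]
  calc |H (z n) - H (x n)|
      ≤ |H (z n) - H (x n + s * ψ (x n))| + |H (x n + s * ψ (x n)) - H (x n)| := abs_sub_le _ _ _
    _ < δ := by rw [abs_sub_comm]; linarith

end

theorem psi_lcf_uniform_convergence_general (ψ a g : ℝ → ℝ)
    (hψ_one : ∀ x, 1 ≤ ψ x) (hψ_mono : Monotone ψ)
    (hψ_small : Tendsto (fun x => ψ x / x) atTop (𝓝 0))
    (ha_pos : ∀ v : ℝ, 0 < v → 0 < a v)
    (hA : ∀ v : ℝ, 0 < v → ∀ᶠ x in atTop, a v * ψ x ≤ ψ (x - v * ψ x))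
    (hg_pos : ∀ x, 0 < g x) (hg_meas : Measurable g)
    (hg_lcf : ∀ v : ℝ, Tendsto (fun x => g (x + v * ψ x) / g x) atTop (𝓝 1)) :
    ∀ v₁ v₂ : ℝ, v₁ < v₂ → ∀ ε > 0, ∃ X : ℝ, ∀ x ≥ X,
      ∀ v ∈ Set.Icc v₁ v₂, |g (x + v * ψ x) / g x - 1| < ε := by
  intro v₁ v₂ _ ε hε
  set V := max |v₁| |v₂| + 1
  have hV : 0 < V := by positivity
  have hlog (v : ℝ) : Tendsto (fun x => log (g (x + v * ψ x)) - log (g x)) atTop (𝓝 0) := by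
    simpa [log_div (hg_pos _).ne' (hg_pos _).ne'] using (hg_lcf v).log one_ne_zero
  have hlog_unif : Tendsto (fun p : ℝ × ℝ => log (g (p.1 + p.2 * ψ p.1)) - log (g p.1))
      (atTop ×ˢ 𝓟 (Icc v₁ v₂)) (𝓝 0) := by
    refine tendsto_iff_seq_tendsto.2 fun p hp => ?_
    refine tendsto_add_mul_sub_of_abs_le (fun x => one_pos.trans_le (hψ_one x)) hψ_mono
      hψ_small (ha_pos V hV) (hA V hV) (measurable_log.comp hg_meas) hlog
      (tendsto_fst.comp hp) ?_
    filter_upwards [tendsto_principal.1 (tendsto_snd.comp hp)] with n hn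
    exact (abs_le_max_abs_abs hn.1 hn.2).trans (le_add_of_nonneg_right zero_le_one)
  have hratio_unif : Tendsto (fun p : ℝ × ℝ => g (p.1 + p.2 * ψ p.1) / g p.1)
      (atTop ×ˢ 𝓟 (Icc v₁ v₂)) (𝓝 1) := by
    refine (exp_zero ▸ (continuous_exp.tendsto 0).comp hlog_unif).congr fun p => ?_
    simp [exp_sub, exp_log (hg_pos _)]
  obtain ⟨X, hX⟩ := eventually_atTop.1
    (eventually_prod_principal_iff.1 (Metric.tendsto_nhds.1 hratio_unif ε hε))
  exact ⟨X, fun x hx v hv => by simpa [Real.dist_eq] using hX x hx v hv⟩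

/-- Uniform convergence theorem for `ψ`-l.c.f.'s with `ψ` in class `𝒦`. -/
theorem psi_lcf_uniform_convergence (ψ a g : ℝ → ℝ)
    (hψ_one : ∀ x, 1 ≤ ψ x) (hψ_mono : Monotone ψ)
    (hψ_small : Tendsto (fun x => ψ x / x) atTop (𝓝 0))
    (ha_anti : AntitoneOn a (Set.Ioi 0))
    (ha_pos : ∀ v : ℝ, 0 < v → 0 < a v)
    (hA : ∀ v : ℝ, 0 < v → ∀ᶠ x in atTop, a v * ψ x ≤ ψ (x - v * ψ x))
    (ha_int : Tendsto (fun r => ∫ u in (0:ℝ)..r, a u) atTop atTop)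
    (hg_pos : ∀ x, 0 < g x) (hg_meas : Measurable g)
    (hg_lcf : ∀ v : ℝ, Tendsto (fun x => g (x + v * ψ x) / g x) atTop (𝓝 1)) :
    ∀ v₁ v₂ : ℝ, v₁ < v₂ → ∀ ε > 0, ∃ X : ℝ, ∀ x ≥ X,
      ∀ v ∈ Set.Icc v₁ v₂, |g (x + v * ψ x) / g x - 1| < ε :=
  psi_lcf_uniform_convergence_general ψ a g hψ_one hψ_mono hψ_small ha_pos hA hg_pos hg_meas hg_lcf
end

section
/- Let ψ ∈ 𝒦 and γ(x) = ∫₁^x dt/ψ(t). For each fixed v > 0 and all sufficiently large x, there exists r = r(x,v) bounded in x such that γ(x + rψ(x)) = γ(x) + v. -/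
/-!
Fix `v > 0` and pick `n` with `a(1) + ⋯ + a(n) ≥ v`; such `n` exists because `a` is antitone with
divergent integral. Put `z_k = x + kψ(x)`. Since `ψ(z_k) ≥ ψ(x)` we have `z_k - kψ(z_k) ≤ x`, so
condition (A) gives `a(k) ψ(z_k) ≤ ψ(x)`, and as `1/ψ` is antitone,
`∫_{z_{k-1}}^{z_k} 1/ψ ≥ ψ(x)/ψ(z_k) ≥ a(k)`. Summing, `γ(z_n) - γ(x) ≥ v`, and the intermediate
value theorem on `r ↦ γ(x + rψ(x))` yields a solution `r ∈ [0, n]`.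
-/

open Filter MeasureTheory
open scoped Topology

/-- The junk value `0` of a non-integrable interval integral forces `f` to be integrable between
`c` and `d`. -/
theorem tendsto_intervalIntegral_atTop_of_lower_limit {f : ℝ → ℝ} {c d : ℝ}
    (hd : ∀ᶠ r in atTop, IntervalIntegrable f volume d r)
    (h : Tendsto (fun r => ∫ u in c..r, f u) atTop atTop) :
    Tendsto (fun r => ∫ u in d..r, f u) atTop atTop := by
  have hcd : IntervalIntegrable f volume c d := by
    by_contra hcd
    obtain ⟨r, hr, hpos⟩ := (hd.and (h.eventually_gt_atTop 0)).exists
    rw [intervalIntegral.integral_undef fun hcr => hcd (hcr.trans hr.symm)] at hpos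
    exact lt_irrefl _ hpos
  refine (tendsto_atTop_add_const_right _ (-∫ u in c..d, f u) h).congr' ?_
  filter_upwards [hd] with r hr
  rw [← intervalIntegral.integral_add_adjacent_intervals hcd hr]
  ring

theorem AntitoneOn.exists_le_sum_of_tendsto_integral {a : ℝ → ℝ} (ha : AntitoneOn a (Set.Ioi 0))
    (ha_int : Tendsto (fun r => ∫ u in (0:ℝ)..r, a u) atTop atTop) (v : ℝ) :
    ∃ n : ℕ, v ≤ ∑ k ∈ Finset.range n, a (k + 1) := by
  have hint : ∀ᶠ r in atTop, IntervalIntegrable a volume 1 r := by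
    filter_upwards [eventually_ge_atTop 1] with r hr
    refine (ha.mono fun t ht => ?_).intervalIntegrable
    rw [Set.uIcc_of_le hr] at ht
    exact lt_of_lt_of_le one_pos ht.1
  have h1 := (tendsto_intervalIntegral_atTop_of_lower_limit hint ha_int).comp
    (tendsto_natCast_atTop_atTop.atTop_add (tendsto_const_nhds (x := (1:ℝ))))
  obtain ⟨n, hn⟩ := (h1.eventually_ge_atTop v).exists
  refine ⟨n, hn.trans ?_⟩
  have := (ha.mono fun t ht => lt_of_lt_of_le one_pos ht.1).integral_le_sum (x₀ := 1) (a := n)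
  simpa only [Function.comp_apply, add_comm (1:ℝ)] using this

section ShiftIntegral

variable {ψ : ℝ → ℝ}

theorem antitone_one_div_of_monotone (hψ_pos : ∀ t, 0 < ψ t) (hψ_mono : Monotone ψ) :
    Antitone fun t => 1 / ψ t :=
  fun _ _ hst => one_div_le_one_div_of_le (hψ_pos _) (hψ_mono hst)

theorem intervalIntegrable_one_div_of_monotone (hψ_pos : ∀ t, 0 < ψ t) (hψ_mono : Monotone ψ)
    (p q : ℝ) : IntervalIntegrable (fun t => 1 / ψ t) volume p q :=
  (antitone_one_div_of_monotone hψ_pos hψ_mono).intervalIntegrable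

theorem div_le_integral_one_div (hψ_pos : ∀ t, 0 < ψ t) (hψ_mono : Monotone ψ) {y z : ℝ}
    (hyz : y ≤ z) : (z - y) / ψ z ≤ ∫ t in y..z, 1 / ψ t := by
  calc (z - y) / ψ z
      = ∫ _ in y..z, 1 / ψ z := by rw [intervalIntegral.integral_const, smul_eq_mul, mul_one_div]
    _ ≤ ∫ t in y..z, 1 / ψ t :=
      intervalIntegral.integral_mono_on hyz intervalIntegrable_const
        (intervalIntegrable_one_div_of_monotone hψ_pos hψ_mono y z)
        fun _ ht => antitone_one_div_of_monotone hψ_pos hψ_mono ht.2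

theorem sum_le_integral_one_div_of_shift {a : ℝ → ℝ} (hψ_pos : ∀ t, 0 < ψ t)
    (hψ_mono : Monotone ψ) {x : ℝ} {n : ℕ}
    (hA : ∀ k < n, ∀ z ≥ x, a (k + 1) * ψ z ≤ ψ (z - (k + 1) * ψ z)) :
    ∑ k ∈ Finset.range n, a (k + 1) ≤ ∫ t in x..x + n * ψ x, 1 / ψ t := by
  induction n with
  | zero => simp
  | succ n ih =>
    set y := x + n * ψ x
    set z := x + (n + 1) * ψ x
    have hxy : x ≤ y := le_add_of_nonneg_right (by positivity [hψ_pos x])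
    have hyz : y ≤ z := by simp only [y, z]; nlinarith [hψ_pos x]
    have hψxz : ψ x ≤ ψ z := hψ_mono (hxy.trans hyz)
    have hstep : a (n + 1) * ψ z ≤ ψ x :=
      (hA n n.lt_succ_self z (hxy.trans hyz)).trans (hψ_mono (by simp only [z]; nlinarith))
    have hpiece : a (n + 1) ≤ ∫ t in y..z, 1 / ψ t := by
      refine le_trans ?_ (div_le_integral_one_div hψ_pos hψ_mono hyz)
      rw [le_div_iff₀ (hψ_pos z)]
      simpa only [y, z, add_sub_add_left_eq_sub, ← sub_mul, add_sub_cancel_left, one_mul] using hstep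
    have hint := intervalIntegrable_one_div_of_monotone hψ_pos hψ_mono
    rw [Finset.sum_range_succ, Nat.cast_succ,
      ← intervalIntegral.integral_add_adjacent_intervals (hint x y) (hint y z)]
    exact add_le_add (ih fun k hk => hA k (hk.trans n.lt_succ_self)) (by exact_mod_cast hpiece)

end ShiftIntegral

theorem gamma_shift_solvable_general (ψ a : ℝ → ℝ)
    (hψ_one : ∀ x, 1 ≤ ψ x) (hψ_mono : Monotone ψ)
    (ha_anti : AntitoneOn a (Set.Ioi 0))
    (hA : ∀ v : ℝ, 0 < v → ∀ᶠ x in atTop, a v * ψ x ≤ ψ (x - v * ψ x))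
    (ha_int : Tendsto (fun r => ∫ u in (0:ℝ)..r, a u) atTop atTop) :
    ∀ v : ℝ, 0 < v → ∃ M : ℝ, 0 < M ∧ ∀ᶠ x in atTop, ∃ r : ℝ,
      0 ≤ r ∧ r ≤ M ∧
      (∫ t in (1:ℝ)..(x + r * ψ x), 1 / ψ t) = (∫ t in (1:ℝ)..x, 1 / ψ t) + v := by
  intro v hv
  have hψ_pos : ∀ t, 0 < ψ t := fun t => one_pos.trans_le (hψ_one t)
  have hint := intervalIntegrable_one_div_of_monotone hψ_pos hψ_mono
  obtain ⟨n, hn⟩ := ha_anti.exists_le_sum_of_tendsto_integral ha_int v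
  have hn_pos : 0 < n := Nat.pos_of_ne_zero fun h => by simp [h] at hn; linarith
  obtain ⟨X, hX⟩ := eventually_atTop.1 <| (eventually_all_finset (Finset.range n)).2
    fun k _ => hA (k + 1) k.cast_add_one_pos
  refine ⟨n, by exact_mod_cast hn_pos, ?_⟩
  filter_upwards [eventually_ge_atTop X] with x hx
  have hlow : (∫ t in (1:ℝ)..x, 1 / ψ t) + v ≤ ∫ t in (1:ℝ)..(x + n * ψ x), 1 / ψ t := by
    have := sum_le_integral_one_div_of_shift hψ_pos hψ_mono
      fun k hk z hz => hX z (hx.trans hz) k (Finset.mem_range.2 hk)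
    rw [← intervalIntegral.integral_add_adjacent_intervals (hint 1 x) (hint x (x + n * ψ x))]
    linarith
  have hcont : Continuous fun r => ∫ t in (1:ℝ)..(x + r * ψ x), 1 / ψ t :=
    (intervalIntegral.continuous_primitive hint 1).comp (by fun_prop)
  obtain ⟨r, hr, hr_eq⟩ := intermediate_value_Icc (Nat.cast_nonneg n) hcont.continuousOn
    ⟨by simp only [zero_mul, add_zero]; linarith, hlow⟩
  exact ⟨r, hr.1, hr.2, hr_eq⟩

/-- For `ψ ∈ 𝒦`, given `v > 0` one can solve `γ(x + rψ(x)) = γ(x) + v` with `r`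
bounded in `x`, where `γ(x) = ∫₁^x dt/ψ(t)`. -/
theorem gamma_shift_solvable (ψ a : ℝ → ℝ)
    (hψ_one : ∀ x, 1 ≤ ψ x) (hψ_mono : Monotone ψ)
    (hψ_small : Tendsto (fun x => ψ x / x) atTop (𝓝 0))
    (ha_anti : AntitoneOn a (Set.Ioi 0))
    (ha_pos : ∀ v : ℝ, 0 < v → 0 < a v)
    (hA : ∀ v : ℝ, 0 < v → ∀ᶠ x in atTop, a v * ψ x ≤ ψ (x - v * ψ x))
    (ha_int : Tendsto (fun r => ∫ u in (0:ℝ)..r, a u) atTop atTop) :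
    ∀ v : ℝ, 0 < v → ∃ M : ℝ, 0 < M ∧ ∀ᶠ x in atTop, ∃ r : ℝ,
      0 ≤ r ∧ r ≤ M ∧
      (∫ t in (1:ℝ)..(x + r * ψ x), 1 / ψ t) = (∫ t in (1:ℝ)..x, 1 / ψ t) + v :=
  gamma_shift_solvable_general ψ a hψ_one hψ_mono ha_anti hA ha_int
end

section
/- Let ψ ∈ 𝒦 and γ(x) = ∫₁^x dt/ψ(t). A positive measurable function g is a ψ-l.c.f. if and only if g admits the representation g(x) = c(x)·exp(∫₁^{e^{γ(x)}} ε(t)/t dt) for x ≥ 1, where c(t) → c ∈ (0,∞) and ε(t) → 0 as t → ∞. -/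
/-!
Put `h = log g`. For `v ≥ 0` the increments `h (x + v ψ x) - h x` tend to `0` pointwise, hence in
measure for `v ∈ [0, U]` because `h` is measurable. Condition (A) keeps `ψ (x + v ψ x) / ψ x`
bounded, so shifts that are good at `x` and shifts that are good at `y = x + v ψ x` overlap after
rescaling; a common good shift gives `h y ≈ h x`, uniformly in `v ∈ [0, U]`. Since `∫ a = ∞`, the
step `x ↦ x + N ψ x` raises `γ` by at least `1` once `N` is large, so `H = h ∘ γ⁻¹` satisfies
`H (u + s) - H u → 0` uniformly in `s ∈ [0, 1]`. Averaging `H` over unit intervals then gives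
`H u = L + o(1) + ∫₀ᵘ ε` with `ε u = H (u + 1) - H u → 0` for large `u`, and `t = eᵘ` turns
this into the stated representation. Conversely `γ (x + v ψ x) - γ x` stays bounded (by `v`, or
by `|v| / a |v|` through condition (A)), so the integral term moves by `o(1)`.
-/

open Filter Real MeasureTheory Set intervalIntegral
open scoped Topology

theorem tendsto_zero_of_forall_eventually_abs_le {α : Type*} {l : Filter α} {f : α → ℝ}
    (h : ∀ ε > 0, ∀ᶠ x in l, |f x| ≤ ε) : Tendsto f l (𝓝 0) :=
  Metric.tendsto_nhds.2 fun ε hε => (h (ε / 2) (half_pos hε)).mono fun x hx => by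
    rw [Real.dist_0_eq_abs]; linarith

theorem tendstoUniformlyOn_zero_iff_abs {ι α : Type*} {F : ι → α → ℝ} {p : Filter ι} {s : Set α} :
    TendstoUniformlyOn F 0 p s ↔ ∀ ε > 0, ∀ᶠ n in p, ∀ x ∈ s, |F n x| < ε := by
  simp only [Metric.tendstoUniformlyOn_iff, Pi.zero_apply, dist_zero_left, Real.norm_eq_abs]

theorem MeasureTheory.tendstoInMeasure_of_tendsto_of_isCountablyGenerated {α ι E : Type*}
    [MeasurableSpace α] {μ : Measure α} [IsFiniteMeasure μ] [PseudoEMetricSpace E]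
    {l : Filter ι} [l.IsCountablyGenerated] {f : ι → α → E} {g : α → E}
    (hf : ∀ i, AEStronglyMeasurable (f i) μ)
    (hfg : ∀ᵐ x ∂μ, Tendsto (fun i => f i x) l (𝓝 (g x))) : TendstoInMeasure μ f l g :=
  fun ε hε => tendsto_of_seq_tendsto fun ns hns =>
    tendstoInMeasure_of_tendsto_ae (fun n => hf (ns n)) (hfg.mono fun _ hx => hx.comp hns) ε hε

theorem MeasureTheory.exists_mem_notMem_notMem_of_measure_add_lt {α : Type*} [MeasurableSpace α]
    {μ : Measure α} {s t u : Set α} (h : μ s + μ t < μ u) : ∃ x ∈ u, x ∉ s ∧ x ∉ t := by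
  by_contra! H
  exact h.not_ge ((measure_mono fun x hx => or_iff_not_imp_left.2 (H x hx)).trans
    (measure_union_le s t))

theorem Real.volume_preimage_add_mul (v : ℝ) {r : ℝ} (hr : r ≠ 0) (s : Set ℝ) :
    volume ((fun x => v + x * r) ⁻¹' s) = ENNReal.ofReal |r⁻¹| * volume s := by
  change volume ((· * r) ⁻¹' ((v + ·) ⁻¹' s)) = _
  rw [Real.volume_preimage_mul_right hr, measure_preimage_add]

theorem intervalIntegrable_of_abs_le {f : ℝ → ℝ} {p q M : ℝ} (hf : Measurable f)
    (hM : ∀ t ∈ uIcc p q, |f t| ≤ M) : IntervalIntegrable f volume p q := by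
  rw [intervalIntegrable_iff]
  refine Measure.integrableOn_of_bounded (M := M) measure_Ioc_lt_top.ne hf.aestronglyMeasurable
    ((ae_restrict_iff' measurableSet_uIoc).2 (ae_of_all _ fun t ht => ?_))
  exact (Real.norm_eq_abs _).trans_le (hM t (uIoc_subset_uIcc ht))

theorem intervalIntegrable_of_tendsto_integral_atTop {f : ℝ → ℝ}
    (hf : Tendsto (fun r => ∫ u in (0 : ℝ)..r, f u) atTop atTop) {r : ℝ} (hr : 0 ≤ r) :
    IntervalIntegrable f volume 0 r := by
  obtain ⟨R, hR, hrR⟩ :=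
    ((hf.eventually (eventually_gt_atTop 0)).and (eventually_ge_atTop r)).exists
  exact (intervalIntegrable_of_integral_ne_zero hR.ne').mono_set
    (uIcc_subset_uIcc left_mem_uIcc (mem_uIcc_of_le hr hrR))

theorem tendsto_sum_range_atTop_of_antitoneOn {a : ℝ → ℝ} (ha_anti : AntitoneOn a (Ioi 0))
    (ha_int : Tendsto (fun r => ∫ u in (0 : ℝ)..r, a u) atTop atTop) :
    Tendsto (fun N : ℕ => ∑ k ∈ Finset.range N, a (1 + k)) atTop atTop := by
  have hle : ∀ N : ℕ, (∫ u in (0 : ℝ)..1 + N, a u) - ∫ u in (0 : ℝ)..1, a u ≤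
      ∑ k ∈ Finset.range N, a (1 + k) := fun N => by
    have hanti : AntitoneOn a (Icc 1 (1 + N)) := ha_anti.mono fun t ht => one_pos.trans_le ht.1
    rw [← integral_add_adjacent_intervals
      (intervalIntegrable_of_tendsto_integral_atTop ha_int zero_le_one)
      (AntitoneOn.intervalIntegrable (by rwa [uIcc_of_le (by simp)]))]
    linarith [hanti.integral_le_sum]
  exact tendsto_atTop_mono hle (tendsto_atTop_add_const_right _ _
    (ha_int.comp (tendsto_atTop_add_const_left _ 1 tendsto_natCast_atTop_atTop)))

namespace intervalIntegral

theorem abs_integral_sub_integral_le {f : ℝ → ℝ} {μ : Measure ℝ} {a p q : ℝ}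
    (hpq : IntervalIntegrable f μ p q) :
    |(∫ x in a..q, f x ∂μ) - ∫ x in a..p, f x ∂μ| ≤ |∫ x in p..q, f x ∂μ| := by
  by_cases hap : IntervalIntegrable f μ a p
  · rw [integral_interval_sub_left (hap.trans hpq) hap]
  · have haq : ¬IntervalIntegrable f μ a q := fun haq => hap (haq.trans hpq.symm)
    simp [integral_undef hap, integral_undef haq]

theorem abs_integral_unit_sub_le {f : ℝ → ℝ} {u c η : ℝ}
    (hf : IntervalIntegrable f volume u (u + 1)) (hη : ∀ t ∈ Icc u (u + 1), |f t - c| ≤ η) :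
    |(∫ t in u..u + 1, f t) - c| ≤ η := by
  have h := norm_integral_le_of_norm_le_const (a := u) (b := u + 1) (C := η)
    (f := fun t => f t - c) fun t ht => hη t (Ioc_subset_Icc_self (by simpa using ht))
  rw [integral_sub hf intervalIntegrable_const] at h
  simpa using h

theorem integral_sub_comp_add_one {f : ℝ → ℝ} (hf : ∀ p q, IntervalIntegrable f volume p q)
    (u : ℝ) : ∫ t in (0 : ℝ)..u, (f (t + 1) - f t) =
      (∫ t in u..u + 1, f t) - ∫ t in (0 : ℝ)..1, f t := by
  have hshift : IntervalIntegrable (fun t => f (t + 1)) volume 0 u := by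
    simpa using (hf 1 (u + 1)).comp_add_right 1
  rw [integral_sub hshift (hf 0 u), integral_comp_add_right, zero_add]
  have h₁ := integral_add_adjacent_intervals (hf 0 1) (hf 1 (u + 1))
  have h₂ := integral_add_adjacent_intervals (hf 0 u) (hf u (u + 1))
  linarith

theorem integral_div_eq_integral_comp_exp (ε : ℝ → ℝ) (b : ℝ) :
    ∫ t in (1 : ℝ)..exp b, ε t / t = ∫ u in (0 : ℝ)..b, ε (exp u) := by
  have h := integral_comp_mul_deriv_of_deriv_nonneg (a := 0) (b := b) (f := exp) (f' := exp)
    (g := fun t => ε t / t) continuous_exp.continuousOn (fun x _ => hasDerivAt_exp x)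
    (fun x _ => (exp_pos x).le)
  rw [exp_zero] at h
  rw [← h]
  exact integral_congr fun u _ => by simp [(exp_pos u).ne']

end intervalIntegral

theorem tendsto_integral_sub_integral {ι : Type*} {l : Filter ι} {f : ℝ → ℝ}
    (hf : Measurable f) (hf0 : Tendsto f atTop (𝓝 0)) {p q : ι → ℝ}
    (hp : Tendsto p l atTop) (hq : Tendsto q l atTop) {C : ℝ}
    (hC : ∀ᶠ i in l, |q i - p i| ≤ C) :
    Tendsto (fun i => (∫ u in (0 : ℝ)..q i, f u) - ∫ u in (0 : ℝ)..p i, f u) l (𝓝 0) := by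
  refine tendsto_zero_of_forall_eventually_abs_le fun η hη => ?_
  have hm : 0 < η / (|C| + 1) := by positivity
  obtain ⟨T, hT⟩ := eventually_atTop.1 (hf0.eventually (Icc_mem_nhds (neg_lt_zero.2 hm) hm))
  filter_upwards [hp.eventually (eventually_ge_atTop T), hq.eventually (eventually_ge_atTop T),
    hC] with i hpi hqi hCi
  have hbound : ∀ u ∈ uIcc (p i) (q i), |f u| ≤ η / (|C| + 1) := fun u hu =>
    abs_le.2 (hT u ((le_min hpi hqi).trans hu.1))
  calc |(∫ u in (0 : ℝ)..q i, f u) - ∫ u in (0 : ℝ)..p i, f u|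
      ≤ |∫ u in p i..q i, f u| :=
        abs_integral_sub_integral_le (intervalIntegrable_of_abs_le hf hbound)
    _ ≤ η / (|C| + 1) * |q i - p i| := by
      simpa using norm_integral_le_of_norm_le_const (f := f) fun u hu =>
        (Real.norm_eq_abs _).trans_le (hbound u (uIoc_subset_uIcc hu))
    _ ≤ η / (|C| + 1) * (|C| + 1) := by gcongr; linarith [le_abs_self C]
    _ = η := div_mul_cancel₀ _ (by positivity)

section AdditiveRepresentation

variable {H : ℝ → ℝ} {U₀ : ℝ}

theorem abs_sub_le_of_forall_abs_shift_lt_one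
    (hU₀ : ∀ u ≥ U₀, ∀ s ∈ Icc (0 : ℝ) 1, |H (u + s) - H u| < 1) (n : ℕ) :
    ∀ t ∈ Icc U₀ (U₀ + n), |H t - H U₀| ≤ n := by
  induction n with
  | zero =>
    intro t ht
    simp [le_antisymm (by simpa using ht.2) ht.1]
  | succ n ih =>
    intro t ht
    rcases le_or_gt t (U₀ + n) with htn | htn
    · exact (ih t ⟨ht.1, htn⟩).trans (by simp)
    · have hstep := hU₀ (U₀ + n) (by simp) (t - (U₀ + n))
        ⟨by linarith, by push_cast at ht; linarith [ht.2]⟩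
      rw [add_sub_cancel] at hstep
      have := ih (U₀ + n) ⟨by simp, le_rfl⟩
      calc |H t - H U₀| ≤ |H t - H (U₀ + n)| + |H (U₀ + n) - H U₀| := abs_sub_le _ _ _
        _ ≤ (n + 1 : ℕ) := by push_cast; linarith

theorem intervalIntegrable_comp_max (hH : Measurable H)
    (hU₀ : ∀ u ≥ U₀, ∀ s ∈ Icc (0 : ℝ) 1, |H (u + s) - H u| < 1) (p q : ℝ) :
    IntervalIntegrable (fun t => H (max t U₀)) volume p q := by
  obtain ⟨n, hn⟩ := exists_nat_ge (max p q - U₀)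
  refine intervalIntegrable_of_abs_le (M := |H U₀| + n)
    (hH.comp (measurable_id.max measurable_const)) fun t ht => ?_
  have htq : t ≤ max p q := ht.2
  have := abs_sub_le_of_forall_abs_shift_lt_one hU₀ n (max t U₀)
    ⟨le_max_right _ _, max_le (by linarith) (by linarith [n.cast_nonneg (α := ℝ)])⟩
  calc |H (max t U₀)| ≤ |H U₀| + |H (max t U₀) - H U₀| := by
        simpa using abs_add_le (H U₀) (H (max t U₀) - H U₀)
    _ ≤ |H U₀| + n := by linarith

/-- The unit averages of `H' = H ∘ (max · U₀)` (locally integrable, unlike `H` itself) follow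
`H`, and `∫₀ᵘ (H' (t + 1) - H' t) dt` telescopes to a difference of two of them. -/
theorem exists_integral_representation (hH : Measurable H)
    (hslow : TendstoUniformlyOn (fun u s => H (u + s) - H u) 0 atTop (Icc 0 1)) :
    ∃ ε : ℝ → ℝ, Measurable ε ∧ (∀ p q, IntervalIntegrable ε volume p q) ∧
      Tendsto ε atTop (𝓝 0) ∧ ∃ L, Tendsto (fun u => H u - ∫ t in (0 : ℝ)..u, ε t) atTop (𝓝 L) := by
  rw [tendstoUniformlyOn_zero_iff_abs] at hslow
  obtain ⟨U₀, hU₀⟩ := eventually_atTop.1 (hslow 1 one_pos)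
  set H' : ℝ → ℝ := fun t => H (max t U₀)
  have hH'_int := intervalIntegrable_comp_max hH hU₀
  have hH' : ∀ t ≥ U₀, H' t = H t := fun t ht => by simp [H', ht]
  refine ⟨fun t => H' (t + 1) - H' t, ?_, fun p q => ?_, ?_, ∫ t in (0 : ℝ)..1, H' t, ?_⟩
  · have hH'_meas : Measurable H' := hH.comp (measurable_id.max measurable_const)
    exact (hH'_meas.comp (measurable_add_const 1)).sub hH'_meas
  · exact (by simpa using (hH'_int (p + 1) (q + 1)).comp_add_right 1 :
      IntervalIntegrable (fun t => H' (t + 1)) volume p q).sub (hH'_int p q)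
  · refine tendsto_zero_of_forall_eventually_abs_le fun η hη => ?_
    filter_upwards [hslow η hη, eventually_ge_atTop U₀] with t ht htU
    rw [hH' _ (by linarith), hH' t htU]
    exact (ht 1 ⟨zero_le_one, le_rfl⟩).le
  · have hclose : Tendsto (fun u => (∫ t in u..u + 1, H' t) - H u) atTop (𝓝 0) := by
      refine tendsto_zero_of_forall_eventually_abs_le fun η hη => ?_
      filter_upwards [hslow η hη, eventually_ge_atTop U₀] with u hu huU
      refine abs_integral_unit_sub_le (hH'_int _ _) fun t ht => ?_
      rw [hH' t (huU.trans ht.1)]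
      simpa using (hu (t - u) ⟨by linarith [ht.1], by linarith [ht.2]⟩).le
    refine (by simpa using (tendsto_const_nhds (x := ∫ t in (0 : ℝ)..1, H' t)).sub hclose :
      Tendsto _ _ _).congr fun u => ?_
    rw [integral_sub_comp_add_one hH'_int]
    ring

end AdditiveRepresentation

namespace PsiLCF

noncomputable def gamma (ψ : ℝ → ℝ) (x : ℝ) : ℝ := ∫ t in (1 : ℝ)..x, 1 / ψ t

def IsLCF (ψ g : ℝ → ℝ) : Prop :=
  ∀ v : ℝ, Tendsto (fun x => g (x + v * ψ x) / g x) atTop (𝓝 1)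

def HasLCFRepresentation (ψ g : ℝ → ℝ) : Prop :=
  ∃ (c ε : ℝ → ℝ) (c₀ : ℝ), Measurable c ∧ Measurable ε ∧ (∀ t, 0 < c t) ∧ 0 < c₀ ∧
    Tendsto c atTop (𝓝 c₀) ∧ Tendsto ε atTop (𝓝 0) ∧
    ∀ x ≥ (1 : ℝ), g x = c x * exp (∫ t in (1 : ℝ)..exp (gamma ψ x), ε t / t)

section Gamma

variable {ψ : ℝ → ℝ}

@[simp] theorem gamma_one : gamma ψ 1 = 0 := integral_same

theorem intervalIntegrable_one_div (hψ_pos : ∀ x, 0 < ψ x) (hψ_mono : Monotone ψ) (p q : ℝ) :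
    IntervalIntegrable (fun t => 1 / ψ t) volume p q :=
  Antitone.intervalIntegrable fun _ _ hst => one_div_le_one_div_of_le (hψ_pos _) (hψ_mono hst)

theorem gamma_sub_gamma (hψ_pos : ∀ x, 0 < ψ x) (hψ_mono : Monotone ψ) (p q : ℝ) :
    gamma ψ q - gamma ψ p = ∫ t in p..q, 1 / ψ t :=
  integral_interval_sub_left (intervalIntegrable_one_div hψ_pos hψ_mono 1 q)
    (intervalIntegrable_one_div hψ_pos hψ_mono 1 p)

theorem div_le_gamma_sub_gamma (hψ_pos : ∀ x, 0 < ψ x) (hψ_mono : Monotone ψ) {p q : ℝ}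
    (hpq : p ≤ q) : (q - p) / ψ q ≤ gamma ψ q - gamma ψ p := by
  have h := integral_mono_on hpq intervalIntegrable_const
    (intervalIntegrable_one_div hψ_pos hψ_mono p q)
    fun t ht => one_div_le_one_div_of_le (hψ_pos t) (hψ_mono ht.2)
  simpa [gamma_sub_gamma hψ_pos hψ_mono, div_eq_mul_inv] using h

theorem gamma_sub_gamma_le_div (hψ_pos : ∀ x, 0 < ψ x) (hψ_mono : Monotone ψ) {p q : ℝ}
    (hpq : p ≤ q) : gamma ψ q - gamma ψ p ≤ (q - p) / ψ p := by
  have h := integral_mono_on hpq (intervalIntegrable_one_div hψ_pos hψ_mono p q)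
    intervalIntegrable_const
    fun t ht => one_div_le_one_div_of_le (hψ_pos p) (hψ_mono ht.1)
  simpa [gamma_sub_gamma hψ_pos hψ_mono, div_eq_mul_inv] using h

theorem gamma_strictMono (hψ_pos : ∀ x, 0 < ψ x) (hψ_mono : Monotone ψ) :
    StrictMono (gamma ψ) := fun p q hpq => by
  have h₁ := div_le_gamma_sub_gamma hψ_pos hψ_mono hpq.le
  have h₂ : 0 < (q - p) / ψ q := div_pos (sub_pos.2 hpq) (hψ_pos q)
  linarith

theorem continuous_gamma (hψ_pos : ∀ x, 0 < ψ x) (hψ_mono : Monotone ψ) :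
    Continuous (gamma ψ) :=
  continuous_primitive (intervalIntegrable_one_div hψ_pos hψ_mono) 1

theorem tendsto_gamma_atTop (hψ_pos : ∀ x, 0 < ψ x) (hψ_mono : Monotone ψ)
    (hψ_small : Tendsto (fun x => ψ x / x) atTop (𝓝 0)) :
    Tendsto (gamma ψ) atTop atTop := by
  have hdiv : Tendsto (fun x => x / ψ x) atTop atTop := by
    have hpos : ∀ᶠ x in atTop, ψ x / x ∈ Ioi 0 :=
      (eventually_gt_atTop 0).mono fun x hx => div_pos (hψ_pos x) hx
    exact (tendsto_inv_nhdsGT_zero.comp (tendsto_nhdsWithin_iff.2 ⟨hψ_small, hpos⟩)).congr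
      fun x => by simp
  refine tendsto_atTop_mono' _ ?_ (tendsto_atTop_add_const_right _ (-(1 / ψ 1)) hdiv)
  filter_upwards [eventually_ge_atTop 1] with x hx
  have h := div_le_gamma_sub_gamma hψ_pos hψ_mono hx
  have : 1 / ψ x ≤ 1 / ψ 1 := one_div_le_one_div_of_le (hψ_pos 1) (hψ_mono hx)
  rw [gamma_one, sub_zero, sub_div] at h
  linarith

theorem tendsto_gamma_atBot (hψ_pos : ∀ x, 0 < ψ x) (hψ_mono : Monotone ψ) :
    Tendsto (gamma ψ) atBot atBot := by
  refine tendsto_atBot_mono' _ ?_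
    ((tendsto_atBot_add_const_right _ (-1) tendsto_id).atBot_div_const (hψ_pos 1))
  filter_upwards [eventually_le_atBot 1] with x hx
  have h := div_le_gamma_sub_gamma hψ_pos hψ_mono hx
  rw [gamma_one, ← neg_sub x 1, neg_div] at h
  simp only [id, ← sub_eq_add_neg]
  linarith

noncomputable def gammaOrderIso (hψ_pos : ∀ x, 0 < ψ x) (hψ_mono : Monotone ψ)
    (hψ_small : Tendsto (fun x => ψ x / x) atTop (𝓝 0)) : ℝ ≃o ℝ :=
  (gamma_strictMono hψ_pos hψ_mono).orderIsoOfSurjective _ <|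
    (continuous_gamma hψ_pos hψ_mono).surjective (tendsto_gamma_atTop hψ_pos hψ_mono hψ_small)
      (tendsto_gamma_atBot hψ_pos hψ_mono)

@[simp] theorem gammaOrderIso_apply (hψ_pos : ∀ x, 0 < ψ x) (hψ_mono : Monotone ψ)
    (hψ_small : Tendsto (fun x => ψ x / x) atTop (𝓝 0)) (x : ℝ) :
    gammaOrderIso hψ_pos hψ_mono hψ_small x = gamma ψ x := rfl

end Gamma

section UniformConvergence

variable {ψ h : ℝ → ℝ}

theorem eventually_mul_psi_add_le (hψ_pos : ∀ x, 0 < ψ x) (hψ_mono : Monotone ψ) {α U : ℝ}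
    (hA : ∀ᶠ y in atTop, α * ψ y ≤ ψ (y - U * ψ y)) :
    ∀ᶠ x in atTop, ∀ v ∈ Icc 0 U, α * ψ (x + v * ψ x) ≤ ψ x := by
  obtain ⟨y₀, hy₀⟩ := eventually_atTop.1 hA
  filter_upwards [eventually_ge_atTop y₀] with x hx v hv
  have hxy : x ≤ x + v * ψ x := le_add_of_nonneg_right (mul_nonneg hv.1 (hψ_pos x).le)
  have hψxy := hψ_mono hxy
  refine (hy₀ _ (hx.trans hxy)).trans (hψ_mono ?_)
  nlinarith [hv.1, hv.2, hψ_pos x]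

/-- The shift `s` at `y` is the shift `v + s ψ(y) / ψ(x)` at `x`, so the two sets of bad `s`
(each of measure `< 1`) cannot cover `[0, 2]`; a common good `s` gives `h y ≈ h x`. -/
theorem abs_sub_lt_of_volume_lt {x y v K η : ℝ} (hψx : 0 < ψ x) (hψxy : ψ x ≤ ψ y)
    (hv : 0 ≤ v) (hK : v + 2 * (ψ y / ψ x) ≤ K) (hy : y = x + v * ψ x)
    (hbad_x : volume ({w | η ≤ |h (x + w * ψ x) - h x|} ∩ Icc 0 K) < 1)
    (hbad_y : volume ({s | η ≤ |h (y + s * ψ y) - h y|} ∩ Icc 0 2) < 1) :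
    |h y - h x| < 2 * η := by
  set r := ψ y / ψ x
  have hr : 1 ≤ r := (one_le_div hψx).2 hψxy
  have hshift : ∀ s, x + (v + s * r) * ψ x = y + s * ψ y := fun s => by
    simp only [r, hy]; field_simp; ring
  set B := (fun s => v + s * r) ⁻¹' ({w | η ≤ |h (x + w * ψ x) - h x|} ∩ Icc 0 K)
  have hB : volume B < 1 := by
    rw [Real.volume_preimage_add_mul v (by positivity), abs_of_pos (by positivity)]
    calc ENNReal.ofReal r⁻¹ * _ ≤ 1 * volume ({w | η ≤ |h (x + w * ψ x) - h x|} ∩ Icc 0 K) :=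
          mul_le_mul_left (ENNReal.ofReal_le_one.2 (inv_le_one_of_one_le₀ hr)) _
      _ < 1 := by rwa [one_mul]
  obtain ⟨s, hs, hsB, hsy⟩ := exists_mem_notMem_notMem_of_measure_add_lt
    (u := Icc (0 : ℝ) 2) (lt_of_lt_of_eq (ENNReal.add_lt_add hB hbad_y) (by norm_num))
  have hw : v + s * r ∈ Icc 0 K := ⟨by nlinarith [hs.1], by nlinarith [hs.2]⟩
  have h1 : |h (y + s * ψ y) - h x| < η := by
    simpa [B, hshift, hw] using hsB
  have h2 : |h (y + s * ψ y) - h y| < η := by simpa [hs] using hsy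
  calc |h y - h x| ≤ |h (y + s * ψ y) - h y| + |h (y + s * ψ y) - h x| := by
        rw [abs_sub_comm (h (y + s * ψ y))]; exact abs_sub_le _ _ _
    _ < 2 * η := by linarith

theorem tendsto_volume_large_increments (hh : Measurable h)
    (hlim : ∀ v, 0 ≤ v → Tendsto (fun x => h (x + v * ψ x) - h x) atTop (𝓝 0))
    (C : ℝ) {η : ℝ} (hη : 0 < η) :
    Tendsto (fun x => volume ({w | η ≤ |h (x + w * ψ x) - h x|} ∩ Icc 0 C)) atTop (𝓝 0) := by
  have hmeas := tendstoInMeasure_of_tendsto_of_isCountablyGenerated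
    (μ := volume.restrict (Icc 0 C)) (f := fun x w => h (x + w * ψ x) - h x) (g := 0)
    (l := atTop)
    (fun x => ((hh.comp (measurable_const.add (measurable_id.mul_const _))).sub_const _)
      |>.aestronglyMeasurable)
    ((ae_restrict_iff' measurableSet_Icc).2 (ae_of_all _ fun w hw => hlim w hw.1))
  simpa [Measure.restrict_apply' measurableSet_Icc, Real.dist_0_eq_abs] using
    tendstoInMeasure_iff_dist.1 hmeas η hη

theorem tendstoUniformlyOn_shift (hψ_pos : ∀ x, 0 < ψ x) (hψ_mono : Monotone ψ) {α U : ℝ}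
    (hα : 0 < α) (hA : ∀ᶠ y in atTop, α * ψ y ≤ ψ (y - U * ψ y)) (hh : Measurable h)
    (hlim : ∀ v, 0 ≤ v → Tendsto (fun x => h (x + v * ψ x) - h x) atTop (𝓝 0)) :
    TendstoUniformlyOn (fun x v => h (x + v * ψ x) - h x) 0 atTop (Icc 0 U) := by
  rw [tendstoUniformlyOn_zero_iff_abs]
  intro ε hε
  have hsmall (C : ℝ) := (tendsto_volume_large_increments hh hlim C (half_pos hε)).eventually
    (gt_mem_nhds one_pos)
  obtain ⟨x₀, hx₀⟩ := eventually_atTop.1 ((hsmall (U + 2 / α)).and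
    ((hsmall 2).and (eventually_mul_psi_add_le hψ_pos hψ_mono hA)))
  filter_upwards [eventually_ge_atTop x₀] with x hx v hv
  have hxy : x ≤ x + v * ψ x := le_add_of_nonneg_right (mul_nonneg hv.1 (hψ_pos x).le)
  have hK : v + 2 * (ψ (x + v * ψ x) / ψ x) ≤ U + 2 / α := by
    have hratio : ψ (x + v * ψ x) / ψ x ≤ 1 / α := by
      rw [div_le_div_iff₀ (hψ_pos x) hα]
      linarith [(hx₀ x hx).2.2 v hv]
    linarith [hv.2, show 2 / α = 2 * (1 / α) by ring]
  have := abs_sub_lt_of_volume_lt (hψ_pos x) (hψ_mono hxy) hv.1 hK rfl (hx₀ x hx).1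
    (hx₀ _ (hx.trans hxy)).2.1
  linarith

end UniformConvergence

section GammaIncrements

variable {ψ : ℝ → ℝ}

theorem eventually_le_gamma_sub_gamma (hψ_pos : ∀ x, 0 < ψ x) (hψ_mono : Monotone ψ)
    {α : ℝ} (k : ℕ) (hA : ∀ᶠ y in atTop, α * ψ y ≤ ψ (y - (1 + k) * ψ y)) :
    ∀ᶠ x in atTop, α ≤ gamma ψ (x + (1 + k) * ψ x) - gamma ψ (x + k * ψ x) := by
  filter_upwards [eventually_mul_psi_add_le hψ_pos hψ_mono hA] with x hx
  have hψx := hψ_pos x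
  have hstep := div_le_gamma_sub_gamma hψ_pos hψ_mono
    (show x + k * ψ x ≤ x + (1 + k) * ψ x by nlinarith)
  have hα := hx (1 + k) ⟨by positivity, le_rfl⟩
  rw [show x + (1 + k) * ψ x - (x + k * ψ x) = ψ x by ring] at hstep
  rw [← le_div_iff₀ (hψ_pos _)] at hα
  linarith

theorem exists_le_gamma_add_mul_sub (hψ_pos : ∀ x, 0 < ψ x) (hψ_mono : Monotone ψ)
    {a : ℝ → ℝ} (ha_anti : AntitoneOn a (Ioi 0))
    (hA : ∀ v : ℝ, 0 < v → ∀ᶠ x in atTop, a v * ψ x ≤ ψ (x - v * ψ x))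
    (ha_int : Tendsto (fun r => ∫ u in (0 : ℝ)..r, a u) atTop atTop) (S : ℝ) :
    ∃ N : ℝ, 0 < N ∧ ∀ᶠ x in atTop, S ≤ gamma ψ (x + N * ψ x) - gamma ψ x := by
  obtain ⟨N, hSN, hN⟩ := (((tendsto_sum_range_atTop_of_antitoneOn ha_anti ha_int).eventually
    (eventually_ge_atTop S)).and (eventually_gt_atTop 0)).exists
  refine ⟨N, Nat.cast_pos.2 hN, ?_⟩
  filter_upwards [(Finset.range N).eventually_all.2 fun k _ =>
    eventually_le_gamma_sub_gamma hψ_pos hψ_mono k (hA _ (by positivity))] with x hx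
  have htel := Finset.sum_range_sub (fun k : ℕ => gamma ψ (x + k * ψ x)) N
  simp only [Nat.cast_zero, zero_mul, add_zero] at htel
  rw [← htel]
  refine hSN.trans (Finset.sum_le_sum fun k hk => ?_)
  simpa [add_comm] using hx k hk

theorem tendstoUniformlyOn_comp_symm (φ : ℝ ≃o ℝ) (hψ_pos : ∀ x, 0 < ψ x) {h : ℝ → ℝ}
    {N S : ℝ} (hN : ∀ᶠ x in atTop, S ≤ φ (x + N * ψ x) - φ x)
    (huct : TendstoUniformlyOn (fun x v => h (x + v * ψ x) - h x) 0 atTop (Icc 0 N)) :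
    TendstoUniformlyOn (fun u s => h (φ.symm (u + s)) - h (φ.symm u)) 0 atTop (Icc 0 S) := by
  rw [tendstoUniformlyOn_zero_iff_abs] at huct ⊢
  intro ε hε
  obtain ⟨x₀, hx₀⟩ := eventually_atTop.1 ((huct ε hε).and hN)
  filter_upwards [φ.symm.tendsto_atTop.eventually (eventually_ge_atTop x₀)] with u hu s hs
  set x := φ.symm u
  have hψx := hψ_pos x
  have hle : x ≤ φ.symm (u + s) := φ.symm.monotone (le_add_of_nonneg_right hs.1)
  have hleN : φ.symm (u + s) ≤ x + N * ψ x := by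
    have := (hx₀ x hu).2
    rw [φ.symm_apply_le, ← φ.apply_symm_apply u]
    linarith [hs.2]
  have hv : x + (φ.symm (u + s) - x) / ψ x * ψ x = φ.symm (u + s) := by field_simp; ring
  have hvN : (φ.symm (u + s) - x) / ψ x ∈ Icc 0 N :=
    ⟨div_nonneg (sub_nonneg.2 hle) hψx.le, (div_le_iff₀ hψx).2 (by linarith)⟩
  simpa [hv] using (hx₀ x hu).1 _ hvN

theorem tendsto_add_mul_psi_atTop (hψ_small : Tendsto (fun x => ψ x / x) atTop (𝓝 0)) (v : ℝ) :
    Tendsto (fun x => x + v * ψ x) atTop atTop := by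
  have h1 : Tendsto (fun x => 1 + v * (ψ x / x)) atTop (𝓝 1) := by
    simpa using (hψ_small.const_mul v).const_add 1
  refine (tendsto_id.atTop_mul_pos one_pos h1).congr' ?_
  filter_upwards [eventually_ne_atTop 0] with x hx
  field_simp
  simp

theorem exists_abs_gamma_add_mul_sub_le (hψ_pos : ∀ x, 0 < ψ x) (hψ_mono : Monotone ψ)
    {a : ℝ → ℝ} (ha_pos : ∀ v : ℝ, 0 < v → 0 < a v)
    (hA : ∀ v : ℝ, 0 < v → ∀ᶠ x in atTop, a v * ψ x ≤ ψ (x - v * ψ x)) (v : ℝ) :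
    ∃ C, ∀ᶠ x in atTop, |gamma ψ (x + v * ψ x) - gamma ψ x| ≤ C := by
  rcases le_or_gt 0 v with hv | hv
  · refine ⟨v, Eventually.of_forall fun x => ?_⟩
    have hxy : x ≤ x + v * ψ x := le_add_of_nonneg_right (mul_nonneg hv (hψ_pos x).le)
    have h := gamma_sub_gamma_le_div hψ_pos hψ_mono hxy
    rw [add_sub_cancel_left, mul_div_cancel_right₀ _ (hψ_pos x).ne'] at h
    rwa [abs_of_nonneg (sub_nonneg.2 ((gamma_strictMono hψ_pos hψ_mono).monotone hxy))]
  · refine ⟨-v / a (-v), ?_⟩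
    filter_upwards [hA (-v) (neg_pos.2 hv)] with x hx
    have hxy : x + v * ψ x ≤ x :=
      add_le_of_nonpos_right (mul_nonpos_of_nonpos_of_nonneg hv.le (hψ_pos x).le)
    have h := gamma_sub_gamma_le_div hψ_pos hψ_mono hxy
    rw [abs_sub_comm,
      abs_of_nonneg (sub_nonneg.2 ((gamma_strictMono hψ_pos hψ_mono).monotone hxy))]
    refine h.trans ?_
    rw [show x - (x + v * ψ x) = -v * ψ x by ring,
      div_le_div_iff₀ (hψ_pos _) (ha_pos _ (neg_pos.2 hv))]
    simp only [neg_mul, sub_neg_eq_add] at hx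
    nlinarith

end GammaIncrements

section Equivalence

variable {ψ a g : ℝ → ℝ}

theorem hasLCFRepresentation_of_isLCF (hψ_pos : ∀ x, 0 < ψ x) (hψ_mono : Monotone ψ)
    (hψ_small : Tendsto (fun x => ψ x / x) atTop (𝓝 0)) (ha_anti : AntitoneOn a (Ioi 0))
    (ha_pos : ∀ v : ℝ, 0 < v → 0 < a v)
    (hA : ∀ v : ℝ, 0 < v → ∀ᶠ x in atTop, a v * ψ x ≤ ψ (x - v * ψ x))
    (ha_int : Tendsto (fun r => ∫ u in (0 : ℝ)..r, a u) atTop atTop)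
    (hg_pos : ∀ x, 0 < g x) (hg_meas : Measurable g) (hg : IsLCF ψ g) :
    HasLCFRepresentation ψ g := by
  set e := gammaOrderIso hψ_pos hψ_mono hψ_small
  have hlog_meas : Measurable fun x => log (g x) := measurable_log.comp hg_meas
  have hlim (v : ℝ) (_ : 0 ≤ v) :
      Tendsto (fun x => log (g (x + v * ψ x)) - log (g x)) atTop (𝓝 0) := by
    have h := (continuousAt_log one_ne_zero).tendsto.comp (hg v)
    rw [log_one] at h
    exact h.congr fun x => log_div (hg_pos _).ne' (hg_pos _).ne'
  obtain ⟨N, hN, hγN⟩ := exists_le_gamma_add_mul_sub hψ_pos hψ_mono ha_anti hA ha_int 1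
  have hslow := tendstoUniformlyOn_comp_symm e hψ_pos hγN
    (tendstoUniformlyOn_shift hψ_pos hψ_mono (ha_pos N hN) (hA N hN) hlog_meas hlim)
  obtain ⟨ε, hε_meas, hε_int, hε, L, hL⟩ :=
    exists_integral_representation (hlog_meas.comp e.symm.monotone.measurable) hslow
  have he (x : ℝ) : e.symm (gamma ψ x) = x := by
    rw [← gammaOrderIso_apply hψ_pos hψ_mono hψ_small]; exact e.symm_apply_apply x
  have hF : Continuous fun x => ∫ u in (0 : ℝ)..gamma ψ x, ε u :=
    (continuous_primitive hε_int 0).comp (continuous_gamma hψ_pos hψ_mono)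
  refine ⟨fun x => g x * exp (-∫ u in (0 : ℝ)..gamma ψ x, ε u), ε ∘ log, exp L,
    hg_meas.mul (measurable_exp.comp hF.measurable.neg), hε_meas.comp measurable_log,
    fun x => mul_pos (hg_pos x) (exp_pos _), exp_pos L, ?_, hε.comp tendsto_log_atTop,
    fun x _ => ?_⟩
  · have := (continuous_exp.tendsto L).comp (hL.comp (tendsto_gamma_atTop hψ_pos hψ_mono hψ_small))
    refine this.congr fun x => ?_
    simp [he, exp_sub, exp_log (hg_pos x), exp_neg, div_eq_mul_inv]
  · rw [integral_div_eq_integral_comp_exp, mul_assoc, ← exp_add]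
    simp

theorem isLCF_of_hasLCFRepresentation (hψ_pos : ∀ x, 0 < ψ x) (hψ_mono : Monotone ψ)
    (hψ_small : Tendsto (fun x => ψ x / x) atTop (𝓝 0)) (ha_pos : ∀ v : ℝ, 0 < v → 0 < a v)
    (hA : ∀ v : ℝ, 0 < v → ∀ᶠ x in atTop, a v * ψ x ≤ ψ (x - v * ψ x))
    (hg : HasLCFRepresentation ψ g) : IsLCF ψ g := by
  obtain ⟨c, ε, c₀, -, hε_meas, -, hc₀, hc, hε, hgc⟩ := hg
  intro v
  have hshift := tendsto_add_mul_psi_atTop hψ_small v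
  have hγ := tendsto_gamma_atTop hψ_pos hψ_mono hψ_small
  obtain ⟨C, hC⟩ := exists_abs_gamma_add_mul_sub_le hψ_pos hψ_mono ha_pos hA v
  have hI := tendsto_integral_sub_integral (hε_meas.comp measurable_exp)
    (hε.comp tendsto_exp_atTop) hγ (hγ.comp hshift) hC
  have hlim := ((hc.comp hshift).div hc hc₀.ne').mul ((continuous_exp.tendsto 0).comp hI)
  rw [div_self hc₀.ne', exp_zero, one_mul] at hlim
  refine hlim.congr' ?_
  filter_upwards [eventually_ge_atTop 1, hshift.eventually (eventually_ge_atTop 1)] with x hx hy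
  simp only [Function.comp_apply, Pi.div_apply]
  rw [hgc x hx, hgc _ hy, integral_div_eq_integral_comp_exp, integral_div_eq_integral_comp_exp,
    exp_sub, mul_div_mul_comm]

end Equivalence

end PsiLCF

/-- Integral representation theorem for `ψ`-l.c.f.'s, `ψ ∈ 𝒦`:
`g` is a `ψ`-l.c.f. iff `g x = c x · exp (∫₁^{e^{γ x}} ε t / t dt)`. -/
theorem psi_lcf_integral_representation (ψ a g : ℝ → ℝ)
    (hψ_one : ∀ x, 1 ≤ ψ x) (hψ_mono : Monotone ψ)
    (hψ_small : Tendsto (fun x => ψ x / x) atTop (𝓝 0))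
    (ha_anti : AntitoneOn a (Set.Ioi 0))
    (ha_pos : ∀ v : ℝ, 0 < v → 0 < a v)
    (hA : ∀ v : ℝ, 0 < v → ∀ᶠ x in atTop, a v * ψ x ≤ ψ (x - v * ψ x))
    (ha_int : Tendsto (fun r => ∫ u in (0:ℝ)..r, a u) atTop atTop)
    (hg_pos : ∀ x, 0 < g x) (hg_meas : Measurable g) :
    (∀ v : ℝ, Tendsto (fun x => g (x + v * ψ x) / g x) atTop (𝓝 1)) ↔
      ∃ (c ε : ℝ → ℝ) (c₀ : ℝ), Measurable c ∧ Measurable ε ∧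
        (∀ t, 0 < c t) ∧ 0 < c₀ ∧
        Tendsto c atTop (𝓝 c₀) ∧ Tendsto ε atTop (𝓝 0) ∧
        ∀ x ≥ (1 : ℝ),
          g x = c x *
            Real.exp (∫ t in (1:ℝ)..(Real.exp (∫ s in (1:ℝ)..x, 1 / ψ s)), ε t / t) := by
  have hψ_pos (x : ℝ) : 0 < ψ x := one_pos.trans_le (hψ_one x)
  exact ⟨PsiLCF.hasLCFRepresentation_of_isLCF hψ_pos hψ_mono hψ_small ha_anti ha_pos hA ha_int
    hg_pos hg_meas, PsiLCF.isLCF_of_hasLCFRepresentation hψ_pos hψ_mono hψ_small ha_pos hA⟩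
end

section
/- Let ψ ∈ 𝒦₁ with index α < 1 and θ(x) = x/ψ(x). A positive measurable g is a ψ-l.c.f. if and only if g(x) = c(x)·exp(∫₁^{e^{θ(x)}} ε(t)/t dt) for x ≥ 1, with c(t) → c ∈ (0,∞) and ε(t) → 0. -/
/-!
Write `θ x = x / ψ x` and `k = log g`. Along `y = x + v ψ x` the function `θ` moves by
`θ y - θ x → (1 - α) v`, a bounded amount. For the converse this bounds the logarithmic length
of the interval `[exp θ x, exp θ y]`, on which `ε t / t` integrates to `o(1)`.

For the direct part, Egorov's theorem makes `k (x + v ψ x) - k x → 0` uniform in `v ∈ [0, V]`: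
otherwise there are `x_n → ∞`, `v_n ∈ [0, V]` with `|k y_n - k x_n| ≥ ε`, and since
`ψ y_n / ψ x_n → 1` a point `x_n + u ψ x_n = y_n + w ψ y_n` can be chosen outside the small
exceptional sets of both base points. Through a monotone inverse `φ` of `θ`, `h = k ∘ φ` then
satisfies `h (s + u) - h s → 0` uniformly in `u ∈ [0, 1]`. Averaging `h` twice over unit intervals
gives a `C¹` function `G` with `h - G → 0` and `G' → 0`, and `s = θ x`, `t = exp s` turns
`G (θ x) = G 0 + ∫₀^{θ x} G'` into the representation with `ε t = G' (log t)`.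
-/

open Filter Real Asymptotics MeasureTheory Set
open scoped Topology

lemma tendstoUniformlyOn_zero_iff {ι α : Type*} {F : ι → α → ℝ} {l : Filter ι} {S : Set α} :
    TendstoUniformlyOn F 0 l S ↔ ∀ ε > 0, ∀ᶠ i in l, ∀ u ∈ S, |F i u| < ε := by
  simp [Metric.tendstoUniformlyOn_iff, dist_zero_left]

lemma abs_integral_le_of_forall_abs_le {F : ℝ → ℝ} {s ε : ℝ}
    (h : ∀ t ∈ Ioc s (s + 1), |F t| ≤ ε) : |∫ t in s..s + 1, F t| ≤ ε := by
  have := intervalIntegral.norm_integral_le_of_norm_le_const (f := F) (C := ε) (a := s)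
    (b := s + 1) (by rwa [uIoc_of_le (by linarith)])
  simpa using this

lemma intervalIntegrable_comp_max_s15 {f : ℝ → ℝ} (hf : Measurable f) {S : ℝ}
    (hbdd : ∀ b, ∃ C, ∀ t ∈ Icc S b, |f t| ≤ C) (a b : ℝ) :
    IntervalIntegrable (fun t => f (max t S)) volume a b := by
  obtain ⟨C, hC⟩ := hbdd (max (max a b) S)
  rw [intervalIntegrable_iff]
  refine Measure.integrableOn_of_bounded (M := C) measure_Ioc_lt_top.ne
    (hf.comp (measurable_id.max measurable_const)).aestronglyMeasurable
    ((ae_restrict_iff' measurableSet_uIoc).2 (ae_of_all _ fun t ht => ?_))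
  exact hC _ ⟨le_max_right _ _, max_le_max_right S ht.2⟩

noncomputable def movingAverage (f : ℝ → ℝ) (s : ℝ) : ℝ :=
  ∫ t in s..s + 1, f t

section MovingAverage

variable {f : ℝ → ℝ}

lemma movingAverage_eq_sub (hf : ∀ a b, IntervalIntegrable f volume a b) (s : ℝ) :
    movingAverage f s = (∫ t in 0..s + 1, f t) - ∫ t in 0..s, f t :=
  (intervalIntegral.integral_interval_sub_left (hf 0 _) (hf 0 s)).symm

lemma continuous_movingAverage (hf : ∀ a b, IntervalIntegrable f volume a b) :
    Continuous (movingAverage f) := by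
  have hF := intervalIntegral.continuous_primitive hf 0
  rw [funext (movingAverage_eq_sub hf)]
  exact (hF.comp (continuous_add_const 1)).sub hF

lemma hasDerivAt_movingAverage (hf : Continuous f) (s : ℝ) :
    HasDerivAt (movingAverage f) (f (s + 1) - f s) s := by
  have hF := fun b => (hf.integral_hasStrictDerivAt 0 b).hasDerivAt
  rw [funext (movingAverage_eq_sub fun a b => hf.intervalIntegrable a b)]
  exact ((hF (s + 1)).comp_add_const s 1).sub (hF s)

lemma integral_sub_shift_eq_movingAverage_sub (hf : Continuous f) (s : ℝ) :
    ∫ t in 0..s, (f (t + 1) - f t) = movingAverage f s - movingAverage f 0 :=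
  intervalIntegral.integral_eq_sub_of_hasDerivAt (fun t _ => hasDerivAt_movingAverage hf t)
    ((by fun_prop : Continuous fun t => f (t + 1) - f t).intervalIntegrable _ _)

end MovingAverage

lemma abs_sub_le_natCast_of_abs_shift_le_one {f : ℝ → ℝ} {S : ℝ}
    (hS : ∀ s ≥ S, ∀ u ∈ Icc (0 : ℝ) 1, |f (s + u) - f s| ≤ 1) :
    ∀ n : ℕ, ∀ t ∈ Icc S (S + n), |f t - f S| ≤ n := by
  intro n
  induction n with
  | zero =>
    intro t ht
    simp [le_antisymm (by simpa using ht.2) ht.1]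
  | succ n ih =>
    intro t ht
    push_cast at ht ⊢
    rcases le_or_gt t (S + n) with htn | htn
    · linarith [ih t ⟨ht.1, htn⟩]
    · have hstep := hS (S + n) (by linarith [n.cast_nonneg (α := ℝ)]) (t - (S + n))
        ⟨by linarith, by linarith [ht.2]⟩
      rw [add_sub_cancel] at hstep
      have := ih (S + n) ⟨by linarith [n.cast_nonneg (α := ℝ)], le_rfl⟩
      calc |f t - f S| ≤ |f t - f (S + n)| + |f (S + n) - f S| := abs_sub_le _ _ _
        _ ≤ 1 + n := add_le_add hstep this
        _ = n + 1 := add_comm _ _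

def AddSlowlyVaryingUniformly (f : ℝ → ℝ) : Prop :=
  TendstoUniformlyOn (fun s u => f (s + u) - f s) 0 atTop (Icc 0 1)

namespace AddSlowlyVaryingUniformly

variable {f g : ℝ → ℝ}

lemma congr (hf : AddSlowlyVaryingUniformly f) (hfg : f =ᶠ[atTop] g) :
    AddSlowlyVaryingUniformly g := by
  rw [AddSlowlyVaryingUniformly, tendstoUniformlyOn_zero_iff] at *
  intro ε hε
  obtain ⟨S, hS⟩ := eventually_atTop.1 hfg
  filter_upwards [hf ε hε, eventually_ge_atTop S] with s hs hsS u hu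
  rw [← hS s hsS, ← hS (s + u) (by linarith [hu.1])]
  exact hs u hu

lemma exists_forall_abs_le (hf : AddSlowlyVaryingUniformly f) :
    ∃ S, ∀ b, ∃ C, ∀ t ∈ Icc S b, |f t| ≤ C := by
  obtain ⟨S, hS⟩ := eventually_atTop.1 (tendstoUniformlyOn_zero_iff.1 hf 1 one_pos)
  refine ⟨S, fun b => ⟨|f S| + ⌈b - S⌉₊, fun t ht => ?_⟩⟩
  have := abs_sub_le_natCast_of_abs_shift_le_one (fun s hs u hu => (hS s hs u hu).le) ⌈b - S⌉₊ t
    ⟨ht.1, by linarith [ht.2, Nat.le_ceil (b - S)]⟩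
  linarith [abs_sub_abs_le_abs_sub (f t) (f S)]

lemma tendsto_sub_movingAverage (hf : AddSlowlyVaryingUniformly f)
    (hint : ∀ a b, IntervalIntegrable f volume a b) :
    Tendsto (fun s => f s - movingAverage f s) atTop (𝓝 0) := by
  rw [Metric.tendsto_nhds]
  intro ε hε
  filter_upwards [tendstoUniformlyOn_zero_iff.1 hf (ε / 2) (half_pos hε)] with s hs
  have hmean : f s - movingAverage f s = ∫ t in s..s + 1, (f s - f t) := by
    rw [intervalIntegral.integral_sub intervalIntegrable_const (hint _ _),
      intervalIntegral.integral_const, movingAverage]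
    simp
  rw [Real.dist_0_eq_abs, hmean]
  refine (abs_integral_le_of_forall_abs_le fun t ht => ?_).trans_lt (half_lt_self hε)
  have := hs (t - s) ⟨by linarith [ht.1], by linarith [ht.2]⟩
  rw [add_sub_cancel] at this
  rw [abs_sub_comm]
  exact this.le

protected lemma movingAverage (hf : AddSlowlyVaryingUniformly f)
    (hint : ∀ a b, IntervalIntegrable f volume a b) :
    AddSlowlyVaryingUniformly (movingAverage f) := by
  rw [AddSlowlyVaryingUniformly, tendstoUniformlyOn_zero_iff] at *
  intro ε hε
  obtain ⟨S, hS⟩ := eventually_atTop.1 (hf (ε / 2) (half_pos hε))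
  filter_upwards [eventually_ge_atTop S] with s hsS u hu
  have hshift : movingAverage f (s + u) - movingAverage f s =
      ∫ t in s..s + 1, (f (t + u) - f t) := by
    have hint_shift : IntervalIntegrable (fun t => f (t + u)) volume s (s + 1) := by
      rw [IntervalIntegrable.comp_add_right_iff]; exact hint _ _
    rw [intervalIntegral.integral_sub hint_shift (hint _ _),
      intervalIntegral.integral_comp_add_right, movingAverage, movingAverage, add_right_comm s 1]
  rw [hshift]
  exact (abs_integral_le_of_forall_abs_le fun t ht => (hS t (by linarith [ht.1]) u hu).le).trans_lt
    (half_lt_self hε)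

theorem exists_tendsto_sub_integral (hf : AddSlowlyVaryingUniformly f) (hmeas : Measurable f) :
    ∃ (C : ℝ) (e : ℝ → ℝ), Continuous e ∧ Tendsto e atTop (𝓝 0) ∧
      Tendsto (fun s => f s - ∫ t in 0..s, e t) atTop (𝓝 C) := by
  obtain ⟨S, hS⟩ := hf.exists_forall_abs_le
  set g : ℝ → ℝ := fun t => f (max t S)
  have hgf : g =ᶠ[atTop] f := by
    filter_upwards [eventually_ge_atTop S] with t ht
    simp [g, max_eq_left ht]
  have hg_int := intervalIntegrable_comp_max_s15 hmeas hS
  have hg := hf.congr hgf.symm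
  -- `H` is continuous, so `movingAverage H` is `C¹` with derivative `H (s + 1) - H s`
  set H := movingAverage g
  have hH_cont : Continuous H := continuous_movingAverage hg_int
  have hH_int : ∀ a b, IntervalIntegrable H volume a b := fun a b => hH_cont.intervalIntegrable a b
  have hH := hg.movingAverage hg_int
  refine ⟨movingAverage H 0, fun s => H (s + 1) - H s, by fun_prop,
    by simpa using hH.tendsto_at (⟨zero_le_one, le_rfl⟩ : (1 : ℝ) ∈ Icc 0 1), ?_⟩
  have hlim := ((hg.tendsto_sub_movingAverage hg_int).add
    (hH.tendsto_sub_movingAverage hH_int)).add_const (movingAverage H 0)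
  rw [zero_add, zero_add] at hlim
  refine hlim.congr' ?_
  filter_upwards [hgf] with s hs
  rw [integral_sub_shift_eq_movingAverage_sub hH_cont, ← hs]
  ring

end AddSlowlyVaryingUniformly

lemma integral_comp_log_div {e : ℝ → ℝ} (he : Continuous e) (a : ℝ) :
    ∫ t in (1 : ℝ)..exp a, e (log t) / t = ∫ u in 0..a, e u := by
  have hg : ContinuousOn (fun t => e (log t) / t) (exp '' uIcc 0 a) := by
    rintro _ ⟨u, -, rfl⟩
    exact ((he.continuousAt.comp (continuousAt_log (exp_pos u).ne')).div continuousAt_id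
      (exp_pos u).ne').continuousWithinAt
  have := intervalIntegral.integral_comp_mul_deriv' (fun x _ => hasDerivAt_exp x)
    continuous_exp.continuousOn hg
  simp only [Function.comp_def, log_exp, exp_zero] at this
  rw [← this]
  refine intervalIntegral.integral_congr fun u _ => ?_
  field_simp

lemma abs_integral_sub_integral_le {f : ℝ → ℝ} {μ : Measure ℝ} {a b c : ℝ}
    (hab : IntervalIntegrable f μ a b) :
    |(∫ x in c..b, f x ∂μ) - ∫ x in c..a, f x ∂μ| ≤ |∫ x in a..b, f x ∂μ| := by
  by_cases hca : IntervalIntegrable f μ c a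
  · rw [intervalIntegral.integral_interval_sub_left (hca.trans hab) hca]
  · have hcb : ¬IntervalIntegrable f μ c b := fun hcb => hca (hcb.trans hab.symm)
    rw [intervalIntegral.integral_undef hca, intervalIntegral.integral_undef hcb, sub_zero,
      abs_zero]
    exact abs_nonneg _

lemma abs_integral_div_le {f : ℝ → ℝ} {P Q δ : ℝ} (hP : 0 < P) (hQ : 0 < Q)
    (hf : ∀ t ∈ uIcc P Q, |f t| ≤ δ) :
    |∫ t in P..Q, f t / t| ≤ δ * |log Q - log P| := by
  wlog hPQ : P ≤ Q generalizing P Q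
  · rw [intervalIntegral.integral_symm, abs_neg, abs_sub_comm]
    exact this hQ hP (by rwa [uIcc_comm]) (le_of_not_ge hPQ)
  have hinv : IntervalIntegrable (fun t => δ * t⁻¹) volume P Q :=
    (intervalIntegral.intervalIntegrable_inv
      (fun t ht => (hP.trans_le (uIcc_of_le hPQ ▸ ht).1).ne') continuousOn_id).const_mul δ
  calc |∫ t in P..Q, f t / t| ≤ ∫ t in P..Q, δ * t⁻¹ := by
        rw [← Real.norm_eq_abs]
        refine intervalIntegral.norm_integral_le_of_norm_le hPQ (ae_of_all _ fun t ht => ?_) hinv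
        have ht0 : 0 < t := hP.trans ht.1
        rw [Real.norm_eq_abs, abs_div, abs_of_pos ht0, div_eq_mul_inv]
        exact mul_le_mul_of_nonneg_right
          (hf t (by rw [uIcc_of_le hPQ]; exact Ioc_subset_Icc_self ht)) (inv_nonneg.2 ht0.le)
    _ = δ * |log Q - log P| := by
        rw [intervalIntegral.integral_const_mul, integral_inv_of_pos hP hQ, log_div hQ.ne' hP.ne',
          abs_of_nonneg (sub_nonneg.2 (log_le_log hP hPQ))]

lemma tendsto_integral_exp_sub_integral_exp {ε : ℝ → ℝ} (hmeas : Measurable ε)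
    (hε : Tendsto ε atTop (𝓝 0)) {ι : Type*} {l : Filter ι} {A B : ι → ℝ}
    (hA : Tendsto A l atTop) (hB : Tendsto B l atTop) {C : ℝ}
    (hAB : ∀ᶠ i in l, |B i - A i| ≤ C) :
    Tendsto (fun i => (∫ t in (1 : ℝ)..exp (B i), ε t / t) - ∫ t in (1 : ℝ)..exp (A i), ε t / t)
      l (𝓝 0) := by
  rw [Metric.tendsto_nhds]
  intro η hη
  set δ := η / (|C| + 1)
  obtain ⟨T, hT⟩ := eventually_atTop.1
    (hε.eventually (Metric.closedBall_mem_nhds 0 (by positivity : 0 < δ)))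
  filter_upwards [hA.eventually_ge_atTop (log (max T 1)), hB.eventually_ge_atTop (log (max T 1)),
    hAB] with i hAi hBi hABi
  have hexp : ∀ x, log (max T 1) ≤ x → max T 1 ≤ exp x := fun x hx => by
    simpa [exp_log (lt_max_of_lt_right one_pos)] using exp_le_exp.2 hx
  have hbound : ∀ t ∈ uIcc (exp (A i)) (exp (B i)), |ε t| ≤ δ ∧ 1 ≤ t := fun t ht => by
    have hTt : max T 1 ≤ t := (le_min (hexp _ hAi) (hexp _ hBi)).trans ht.1
    exact ⟨by simpa using hT t (le_of_max_le_left hTt), le_of_max_le_right hTt⟩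
  have hint : IntervalIntegrable (fun t => ε t / t) volume (exp (A i)) (exp (B i)) := by
    refine (intervalIntegrable_const (c := δ)).mono_fun'
      (hmeas.div measurable_id).aestronglyMeasurable
      ((ae_restrict_iff' measurableSet_uIoc).2 (ae_of_all _ fun t ht => ?_))
    obtain ⟨hεt, ht1⟩ := hbound t (uIoc_subset_uIcc ht)
    change ‖ε t / t‖ ≤ δ
    rw [Real.norm_eq_abs, abs_div, abs_of_pos (one_pos.trans_le ht1)]
    exact (div_le_self (abs_nonneg _) ht1).trans hεt
  rw [Real.dist_0_eq_abs]
  calc _ ≤ |∫ t in exp (A i)..exp (B i), ε t / t| := abs_integral_sub_integral_le hint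
    _ ≤ δ * |B i - A i| := by
        simpa using abs_integral_div_le (exp_pos _) (exp_pos _) fun t ht => (hbound t ht).1
    _ ≤ δ * |C| := mul_le_mul_of_nonneg_left (hABi.trans (le_abs_self C)) (by positivity)
    _ < η := by
        rw [div_mul_eq_mul_div, div_lt_iff₀ (by positivity)]
        nlinarith [abs_nonneg C]

section Shift

variable {ψ : ℝ → ℝ} {α v : ℝ}

lemma tendsto_div_self_of_tendsto_self_div (hθ : Tendsto (fun x => x / ψ x) atTop atTop) :
    Tendsto (fun x => ψ x / x) atTop (𝓝 0) := by
  exact hθ.inv_tendsto_atTop.congr fun x => inv_div _ _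

lemma tendsto_psi_shift_div_psi (hψ : ∀ x, 0 < ψ x) (hθ : Tendsto (fun x => x / ψ x) atTop atTop)
    (hv : (fun x => ψ (x + v * ψ x) - ψ x - α * v * ψ x ^ 2 / x) =o[atTop]
      fun x => ψ x ^ 2 / x) :
    Tendsto (fun x => ψ (x + v * ψ x) / ψ x) atTop (𝓝 1) := by
  -- `ψ (x + v ψ x) / ψ x = 1 + (α v + r x) (ψ x / x)`, where `r → 0` is the quotient in `hv`
  have hlim := tendsto_const_nhds (x := (1 : ℝ)).add
    ((tendsto_const_nhds (x := α * v)).add hv.tendsto_div_nhds_zero |>.mul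
      (tendsto_div_self_of_tendsto_self_div hθ))
  rw [add_zero, mul_zero, add_zero] at hlim
  refine hlim.congr' ?_
  filter_upwards [eventually_gt_atTop 0] with x hx
  have := hψ x
  field_simp
  ring

lemma tendsto_theta_shift_sub_theta (hψ : ∀ x, 0 < ψ x)
    (hθ : Tendsto (fun x => x / ψ x) atTop atTop)
    (hv : (fun x => ψ (x + v * ψ x) - ψ x - α * v * ψ x ^ 2 / x) =o[atTop]
      fun x => ψ x ^ 2 / x) :
    Tendsto (fun x => (x + v * ψ x) / ψ (x + v * ψ x) - x / ψ x) atTop (𝓝 ((1 - α) * v)) := by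
  -- the difference is `((1 - α) v - r x) (ψ x / ψ (x + v ψ x))`, with `r` as above
  have hlim := ((tendsto_const_nhds (x := (1 - α) * v)).sub hv.tendsto_div_nhds_zero).mul
    ((tendsto_psi_shift_div_psi hψ hθ hv).inv₀ one_ne_zero)
  rw [sub_zero, inv_one, mul_one] at hlim
  refine hlim.congr' ?_
  filter_upwards [eventually_gt_atTop 0] with x hx
  have := hψ x
  have := hψ (x + v * ψ x)
  field_simp
  ring

end Shift

/-- A monotone, hence measurable, right inverse of `θ` on `[θ 1, ∞)`; the `max` keeps the set
nonempty. -/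
noncomputable def genInv (θ : ℝ → ℝ) (s : ℝ) : ℝ :=
  sSup {x | 1 ≤ x ∧ θ x ≤ max s (θ 1)}

section GenInv

variable {θ : ℝ → ℝ}

lemma bddAbove_genInv_set (htop : Tendsto θ atTop atTop) (s : ℝ) :
    BddAbove {x | 1 ≤ x ∧ θ x ≤ max s (θ 1)} := by
  obtain ⟨M, hM⟩ := eventually_atTop.1 (htop.eventually_gt_atTop (max s (θ 1)))
  exact ⟨M, fun x hx => le_of_not_gt fun hxM => (hM x hxM.le).not_ge hx.2⟩

lemma one_le_genInv (htop : Tendsto θ atTop atTop) (s : ℝ) : 1 ≤ genInv θ s :=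
  le_csSup (bddAbove_genInv_set htop s) ⟨le_rfl, le_max_right _ _⟩

lemma monotone_genInv (htop : Tendsto θ atTop atTop) : Monotone (genInv θ) :=
  fun _ t hst => csSup_le_csSup (bddAbove_genInv_set htop t) ⟨1, le_rfl, le_max_right _ _⟩
    fun _ hx => ⟨hx.1, hx.2.trans (max_le_max_right _ hst)⟩

lemma genInv_apply (hmono : StrictMonoOn θ (Ici 1)) {x : ℝ} (hx : 1 ≤ x) :
    genInv θ (θ x) = x := by
  have hθx : max (θ x) (θ 1) = θ x :=
    max_eq_left (hmono.monotoneOn (mem_Ici.2 le_rfl) (mem_Ici.2 hx) hx)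
  refine IsGreatest.csSup_eq ⟨⟨hx, hθx.ge⟩, fun y hy => le_of_not_gt fun hxy => ?_⟩
  exact (hmono (mem_Ici.2 hx) (mem_Ici.2 hy.1) hxy).not_ge (hθx ▸ hy.2)

lemma apply_genInv (hcont : ContinuousOn θ (Ici 1)) (hmono : StrictMonoOn θ (Ici 1))
    (htop : Tendsto θ atTop atTop) {s : ℝ} (hs : θ 1 ≤ s) : θ (genInv θ s) = s := by
  obtain ⟨M, hMs, hM⟩ := ((htop.eventually_ge_atTop s).and (eventually_ge_atTop 1)).exists
  obtain ⟨x, hx, rfl⟩ := intermediate_value_Icc hM (hcont.mono Icc_subset_Ici_self) ⟨hs, hMs⟩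
  rw [genInv_apply hmono hx.1]

lemma tendsto_genInv (hmono : StrictMonoOn θ (Ici 1)) (htop : Tendsto θ atTop atTop) :
    Tendsto (genInv θ) atTop atTop :=
  (monotone_genInv htop).tendsto_atTop_atTop fun b =>
    ⟨θ (max b 1), (le_max_left b 1).trans (genInv_apply hmono (le_max_right b 1)).ge⟩

end GenInv

section UniformConvergence

variable {ψ k : ℝ → ℝ}

lemma exists_volume_le_eventually_abs_shift_lt (hk : Measurable k)
    (hconv : ∀ v, Tendsto (fun x => k (x + v * ψ x) - k x) atTop (𝓝 0))
    {xs : ℕ → ℝ} (hxs : Tendsto xs atTop atTop) (b : ℝ) {δ η : ℝ} (hδ : 0 < δ) (hη : 0 < η) :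
    ∃ t, volume t ≤ ENNReal.ofReal η ∧
      ∀ᶠ n in atTop, ∀ u ∈ Icc 0 b \ t, |k (xs n + u * ψ (xs n)) - k (xs n)| < δ := by
  have hmeas : ∀ n, Measurable fun u => k (xs n + u * ψ (xs n)) - k (xs n) := fun n =>
    (hk.comp (measurable_const.add (measurable_id.mul_const _))).sub measurable_const
  obtain ⟨t, -, -, ht, hunif⟩ := tendstoUniformlyOn_of_ae_tendsto (μ := volume) (g := 0)
    (fun n => (hmeas n).stronglyMeasurable) stronglyMeasurable_const measurableSet_Icc
    measure_Icc_lt_top.ne (ae_of_all volume fun u _ => (hconv u).comp hxs) hη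
  exact ⟨t, ht, tendstoUniformlyOn_zero_iff.1 hunif δ hδ⟩

lemma exists_mem_Icc_notMem_of_volume_le {a ρ η₁ η₂ : ℝ} {t₁ t₂ : Set ℝ} (hρ : 0 < ρ)
    (ht₁ : volume t₁ ≤ ENNReal.ofReal η₁) (ht₂ : volume t₂ ≤ ENNReal.ofReal η₂)
    (hη₁ : 0 ≤ η₁) (hη₂ : 0 ≤ η₂) (h : η₁ + ρ * η₂ < 1) :
    ∃ u ∈ Icc a (a + 1), u ∉ t₁ ∧ (u - a) / ρ ∉ t₂ := by
  by_contra! hcover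
  have hvol : volume ((fun u => (u - a) / ρ) ⁻¹' t₂) = ENNReal.ofReal ρ * volume t₂ := by
    have : (fun u => (u - a) / ρ) ⁻¹' t₂ = (· + -a) ⁻¹' ((ρ⁻¹ * ·) ⁻¹' t₂) := by
      ext u
      simp [div_eq_inv_mul, sub_eq_add_neg]
    rw [this, measure_preimage_add_right, Real.volume_preimage_mul_left (inv_ne_zero hρ.ne'),
      inv_inv, abs_of_pos hρ]
  have hcover' : Icc a (a + 1) ⊆ t₁ ∪ (fun u => (u - a) / ρ) ⁻¹' t₂ := fun u hu =>
    or_iff_not_imp_left.2 (hcover u hu)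
  have hle := (measure_mono (μ := volume) hcover').trans (measure_union_le _ _)
  rw [hvol, Real.volume_Icc, add_sub_cancel_left, ENNReal.ofReal_one] at hle
  refine hle.not_gt ?_
  calc volume t₁ + ENNReal.ofReal ρ * volume t₂
      ≤ ENNReal.ofReal η₁ + ENNReal.ofReal ρ * ENNReal.ofReal η₂ := by gcongr
    _ = ENNReal.ofReal (η₁ + ρ * η₂) := by
        rw [← ENNReal.ofReal_mul hρ.le, ENNReal.ofReal_add hη₁ (by positivity)]
    _ < 1 := ENNReal.ofReal_lt_one.2 h

lemma eventually_theta_le_theta_shift_le {ψ : ℝ → ℝ} (hψ : ∀ x, 0 < ψ x)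
    (hmono : StrictMonoOn (fun x => x / ψ x) (Ici 1))
    (hθ : Tendsto (fun x => x / ψ x) atTop atTop) {α V : ℝ}
    (hV : (fun x => ψ (x + V * ψ x) - ψ x - α * V * ψ x ^ 2 / x) =o[atTop]
      fun x => ψ x ^ 2 / x) :
    ∀ᶠ x in atTop, ∀ v ∈ Icc 0 V, x / ψ x ≤ (x + v * ψ x) / ψ (x + v * ψ x) ∧
      (x + v * ψ x) / ψ (x + v * ψ x) ≤ x / ψ x + ((1 - α) * V + 1) := by
  filter_upwards [(tendsto_theta_shift_sub_theta hψ hθ hV).eventually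
    (eventually_le_nhds (lt_add_one _)), eventually_ge_atTop 1] with x hx hx1 v hv
  have hmono' : ∀ w ∈ Icc 0 V, ∀ w' ∈ Icc 0 V, w ≤ w' →
      (x + w * ψ x) / ψ (x + w * ψ x) ≤ (x + w' * ψ x) / ψ (x + w' * ψ x) :=
    fun w hw w' hw' hww' => hmono.monotoneOn
      (mem_Ici.2 (hx1.trans (le_add_of_nonneg_right (mul_nonneg hw.1 (hψ x).le))))
      (mem_Ici.2 (hx1.trans (le_add_of_nonneg_right (mul_nonneg hw'.1 (hψ x).le))))
      (by gcongr; exact (hψ x).le)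
  have hV0 : V ∈ Icc 0 V := ⟨hv.1.trans hv.2, le_rfl⟩
  exact ⟨by simpa using hmono' 0 ⟨le_rfl, hV0.1⟩ v hv hv.1,
    by linarith [hmono' v hv V hV0 hv.2]⟩

lemma tendsto_psi_shift_div_psi_of_mem_Icc (hψ : ∀ x, 0 < ψ x)
    (hmono : StrictMonoOn (fun x => x / ψ x) (Ici 1))
    (hθ : Tendsto (fun x => x / ψ x) atTop atTop) {α V : ℝ}
    (hV : (fun x => ψ (x + V * ψ x) - ψ x - α * V * ψ x ^ 2 / x) =o[atTop]
      fun x => ψ x ^ 2 / x)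
    {xs vs : ℕ → ℝ} (hxs : Tendsto xs atTop atTop) (hvs : ∀ n, vs n ∈ Icc 0 V) :
    Tendsto (fun n => ψ (xs n + vs n * ψ (xs n)) / ψ (xs n)) atTop (𝓝 1) := by
  set θ : ℝ → ℝ := fun x => x / ψ x
  set ys := fun n => xs n + vs n * ψ (xs n)
  have hyx : Tendsto (fun n => ys n / xs n) atTop (𝓝 1) := by
    have hsmall := ((tendsto_div_self_of_tendsto_self_div hθ).comp hxs).zero_mul_isBoundedUnder_le
      (g := vs) (isBoundedUnder_of ⟨V, fun n => by
        rw [Function.comp_apply, Real.norm_eq_abs, abs_of_nonneg (hvs n).1]; exact (hvs n).2⟩)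
    have hlim := tendsto_const_nhds (x := (1 : ℝ)).add hsmall
    rw [add_zero] at hlim
    refine hlim.congr' ?_
    filter_upwards [hxs.eventually_gt_atTop 0] with n hn
    simp only [Function.comp_apply, ys]
    field_simp
  have hgap : ∀ᶠ n in atTop, θ (xs n) ≤ θ (ys n) ∧ θ (ys n) ≤ θ (xs n) + ((1 - α) * V + 1) :=
    (hxs.eventually (eventually_theta_le_theta_shift_le hψ hmono hθ hV)).mono
      fun n hn => hn (vs n) (hvs n)
  have hθθ : Tendsto (fun n => θ (ys n) / θ (xs n)) atTop (𝓝 1) := by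
    have hsmall := isBoundedUnder_le_mul_tendsto_zero (f := fun n => θ (ys n) - θ (xs n))
      (isBoundedUnder_of_eventually_le (a := (1 - α) * V + 1) (hgap.mono fun n hn => by
        rw [Function.comp_apply, Real.norm_eq_abs, abs_of_nonneg (sub_nonneg.2 hn.1)]
        linarith [hn.2]))
      (hθ.comp hxs).inv_tendsto_atTop
    have hlim := tendsto_const_nhds (x := (1 : ℝ)).add hsmall
    rw [add_zero] at hlim
    refine hlim.congr' ?_
    filter_upwards [(hθ.comp hxs).eventually_gt_atTop 0] with n hn
    simp only [Function.comp_apply, Pi.inv_apply] at hn ⊢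
    field_simp
    ring
  have hlim := hyx.div hθθ one_ne_zero
  rw [div_one] at hlim
  refine hlim.congr' ?_
  filter_upwards [hxs.eventually_gt_atTop 0] with n hn
  have hyn : 0 < ys n := hn.trans_le (le_add_of_nonneg_right (mul_nonneg ((hvs n).1) (hψ _).le))
  have := hψ (xs n)
  have := hψ (ys n)
  show ys n / xs n / (θ (ys n) / θ (xs n)) = ψ (ys n) / ψ (xs n)
  simp only [θ]
  field_simp

theorem tendstoUniformlyOn_shift_sub (hψ : ∀ x, 0 < ψ x)
    (hmono : StrictMonoOn (fun x => x / ψ x) (Ici 1))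
    (hθ : Tendsto (fun x => x / ψ x) atTop atTop) {α V : ℝ}
    (hV : (fun x => ψ (x + V * ψ x) - ψ x - α * V * ψ x ^ 2 / x) =o[atTop]
      fun x => ψ x ^ 2 / x)
    (hk : Measurable k) (hconv : ∀ v, Tendsto (fun x => k (x + v * ψ x) - k x) atTop (𝓝 0)) :
    TendstoUniformlyOn (fun x v => k (x + v * ψ x) - k x) 0 atTop (Icc 0 V) := by
  rw [tendstoUniformlyOn_zero_iff]
  intro ε hε
  by_contra hfail
  obtain ⟨xs, hxs, hbad⟩ := exists_seq_forall_of_frequently (not_eventually.1 hfail)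
  push Not at hbad
  choose vs hvs hbad using hbad
  set ys := fun n => xs n + vs n * ψ (xs n)
  have hys : Tendsto ys atTop atTop := tendsto_atTop_mono
    (fun n => le_add_of_nonneg_right (mul_nonneg (hvs n).1 (hψ _).le)) hxs
  obtain ⟨t₁, ht₁, hgood₁⟩ := exists_volume_le_eventually_abs_shift_lt hk hconv hxs (V + 1)
    (half_pos hε) (by norm_num : (0 : ℝ) < 1 / 8)
  obtain ⟨t₂, ht₂, hgood₂⟩ := exists_volume_le_eventually_abs_shift_lt hk hconv hys 2
    (half_pos hε) (by norm_num : (0 : ℝ) < 1 / 8)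
  obtain ⟨n, hn₁, hn₂, hρn⟩ := (hgood₁.and (hgood₂.and
    ((tendsto_psi_shift_div_psi_of_mem_Icc hψ hmono hθ hV hxs hvs).eventually
      (Ioo_mem_nhds (by norm_num : (1 : ℝ) / 2 < 1) one_lt_two)))).exists
  set ρ := ψ (ys n) / ψ (xs n)
  have hρ : 0 < ρ := by linarith [hρn.1]
  obtain ⟨u, hu, hu₁, hu₂⟩ := exists_mem_Icc_notMem_of_volume_le (a := vs n) hρ ht₁ ht₂
    (by norm_num) (by norm_num) (by linarith [hρn.2])
  have hmeet : xs n + u * ψ (xs n) = ys n + (u - vs n) / ρ * ψ (ys n) := by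
    have hscale : (u - vs n) / ρ * ψ (ys n) = (u - vs n) * ψ (xs n) := by
      have := hψ (xs n)
      have := hψ (ys n)
      simp only [ρ]
      field_simp
    rw [hscale]
    ring
  have h₁ := hn₁ u ⟨⟨by linarith [(hvs n).1, hu.1], by linarith [(hvs n).2, hu.2]⟩, hu₁⟩
  have h₂ := hn₂ ((u - vs n) / ρ) ⟨⟨div_nonneg (by linarith [hu.1]) hρ.le,
    (div_le_iff₀ hρ).2 (by linarith [hu.2, hρn.1])⟩, hu₂⟩
  rw [← hmeet] at h₂
  have := abs_sub_le (k (ys n)) (k (xs n + u * ψ (xs n))) (k (xs n))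
  rw [abs_sub_comm (k (ys n)) (k (xs n + u * ψ (xs n)))] at this
  linarith [show ε ≤ |k (ys n) - k (xs n)| from hbad n]

end UniformConvergence

theorem addSlowlyVaryingUniformly_comp_genInv {ψ k : ℝ → ℝ} (hψ_cont : Continuous ψ)
    (hψ : ∀ x, 0 < ψ x) (hmono : StrictMonoOn (fun x => x / ψ x) (Ici 1))
    (hθ : Tendsto (fun x => x / ψ x) atTop atTop) {V : ℝ} (hV : 0 ≤ V)
    (hVθ : ∀ᶠ x in atTop, x / ψ x + 1 ≤ (x + V * ψ x) / ψ (x + V * ψ x))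
    (hunif : TendstoUniformlyOn (fun x v => k (x + v * ψ x) - k x) 0 atTop (Icc 0 V)) :
    AddSlowlyVaryingUniformly (k ∘ genInv fun x => x / ψ x) := by
  set θ : ℝ → ℝ := fun x => x / ψ x
  have hθ_cont : ContinuousOn θ (Ici 1) :=
    (continuous_id.div hψ_cont fun x => (hψ x).ne').continuousOn
  rw [AddSlowlyVaryingUniformly, tendstoUniformlyOn_zero_iff] at *
  intro ε hε
  have hφ := tendsto_genInv hmono hθ
  filter_upwards [hφ.eventually (hunif ε hε), hφ.eventually hVθ, eventually_ge_atTop (θ 1)]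
    with s hs hsV hs1 u hu
  set x := genInv θ s
  set z := genInv θ (s + u)
  have hx1 : 1 ≤ x := one_le_genInv hθ s
  have hθx : θ x = s := apply_genInv hθ_cont hmono hθ hs1
  have hθz : θ z = s + u := apply_genInv hθ_cont hmono hθ (by linarith [hu.1])
  have hxz : x ≤ z := monotone_genInv hθ (by linarith [hu.1])
  -- `θ z ≤ θ x + 1 ≤ θ (x + V ψ x)`, so `z` lies within `V ψ x` of `x`
  have hzV : z ≤ x + V * ψ x := by
    by_contra! hlt
    have := hmono (mem_Ici.2 (hx1.trans (le_add_of_nonneg_right (mul_nonneg hV (hψ x).le))))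
      (mem_Ici.2 (hx1.trans hxz)) hlt
    simp only [θ] at hθx hθz hsV this
    linarith [hu.2]
  have hz : z = x + (z - x) / ψ x * ψ x := by
    rw [div_mul_cancel₀ _ (hψ x).ne']
    ring
  have := hs ((z - x) / ψ x) ⟨div_nonneg (sub_nonneg.2 hxz) (hψ x).le,
    (div_le_iff₀ (hψ x)).2 (by linarith)⟩
  rwa [← hz] at this

theorem exists_integral_representation_of_tendsto_shift_div {ψ g : ℝ → ℝ} {α : ℝ} (hα : α < 1)
    (hψ_cont : Continuous ψ) (hψ : ∀ x, 0 < ψ x)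
    (hmono : StrictMonoOn (fun x => x / ψ x) (Ici 1))
    (hθ : Tendsto (fun x => x / ψ x) atTop atTop)
    (hsmooth : ∀ v : ℝ, (fun x => ψ (x + v * ψ x) - ψ x - α * v * ψ x ^ 2 / x) =o[atTop]
      fun x => ψ x ^ 2 / x)
    (hg_pos : ∀ x, 0 < g x) (hg_meas : Measurable g)
    (hlcf : ∀ v : ℝ, Tendsto (fun x => g (x + v * ψ x) / g x) atTop (𝓝 1)) :
    ∃ (c ε : ℝ → ℝ) (c₀ : ℝ), Measurable c ∧ Measurable ε ∧
      (∀ t, 0 < c t) ∧ 0 < c₀ ∧ Tendsto c atTop (𝓝 c₀) ∧ Tendsto ε atTop (𝓝 0) ∧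
      ∀ x ≥ (1 : ℝ), g x = c x * exp (∫ t in (1 : ℝ)..exp (x / ψ x), ε t / t) := by
  have hk : Measurable fun x => log (g x) := hg_meas.log
  have hconv : ∀ v, Tendsto (fun x => log (g (x + v * ψ x)) - log (g x)) atTop (𝓝 0) :=
    fun v => by
      simpa [Function.comp_def, log_div (hg_pos _).ne' (hg_pos _).ne'] using
        (continuousAt_log one_ne_zero).tendsto.comp (hlcf v)
  set V := 2 / (1 - α)
  have hV : 0 ≤ V := div_nonneg zero_le_two (by linarith)
  have hVθ : ∀ᶠ x in atTop, x / ψ x + 1 ≤ (x + V * ψ x) / ψ (x + V * ψ x) := by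
    have hlim := tendsto_theta_shift_sub_theta hψ hθ (hsmooth V)
    rw [show (1 - α) * V = 2 from mul_div_cancel₀ 2 (by linarith)] at hlim
    filter_upwards [hlim.eventually (eventually_ge_nhds one_lt_two)] with x hx
    linarith
  have hh := addSlowlyVaryingUniformly_comp_genInv hψ_cont hψ hmono hθ hV hVθ
    (tendstoUniformlyOn_shift_sub hψ hmono hθ (hsmooth V) hk hconv)
  obtain ⟨C, e, he_cont, he, hrep⟩ :=
    hh.exists_tendsto_sub_integral (hk.comp (monotone_genInv hθ).measurable)
  set I : ℝ → ℝ := fun x => ∫ u in 0..x / ψ x, e u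
  have hI_cont : Continuous I :=
    (intervalIntegral.continuous_primitive (fun a b => he_cont.intervalIntegrable a b) 0).comp
      (continuous_id.div hψ_cont fun x => (hψ x).ne')
  refine ⟨fun x => g x / exp (I x), fun t => e (log t), exp C,
    hg_meas.div hI_cont.rexp.measurable, he_cont.measurable.comp measurable_log,
    fun x => div_pos (hg_pos x) (exp_pos _), exp_pos C, ?_, he.comp tendsto_log_atTop,
    fun x _ => ?_⟩
  · refine ((continuous_exp.tendsto C).comp (hrep.comp hθ)).congr' ?_
    filter_upwards [eventually_ge_atTop 1] with x hx
    simp only [Function.comp_apply, I]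
    rw [genInv_apply hmono hx, exp_sub, exp_log (hg_pos x)]
  · rw [integral_comp_log_div he_cont, div_mul_cancel₀ _ (exp_pos _).ne']

theorem tendsto_shift_div_of_integral_representation {ψ g c ε : ℝ → ℝ} {α c₀ v : ℝ}
    (hψ : ∀ x, 0 < ψ x) (hθ : Tendsto (fun x => x / ψ x) atTop atTop)
    (hv : (fun x => ψ (x + v * ψ x) - ψ x - α * v * ψ x ^ 2 / x) =o[atTop]
      fun x => ψ x ^ 2 / x)
    (hε_meas : Measurable ε) (hc : Tendsto c atTop (𝓝 c₀)) (hc₀ : c₀ ≠ 0)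
    (hε : Tendsto ε atTop (𝓝 0))
    (hrep : ∀ x ≥ (1 : ℝ), g x = c x * exp (∫ t in (1 : ℝ)..exp (x / ψ x), ε t / t)) :
    Tendsto (fun x => g (x + v * ψ x) / g x) atTop (𝓝 1) := by
  set y : ℝ → ℝ := fun x => x + v * ψ x
  have hy : Tendsto y atTop atTop := by
    have hlim := tendsto_const_nhds (x := (1 : ℝ)).add
      ((tendsto_div_self_of_tendsto_self_div hθ).const_mul v)
    rw [mul_zero, add_zero] at hlim
    refine (tendsto_id.atTop_mul_pos one_pos hlim).congr' ?_
    filter_upwards [eventually_gt_atTop 0] with x hx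
    simp only [id, y]
    field_simp
  have hgap : ∀ᶠ x in atTop, |y x / ψ (y x) - x / ψ x| ≤ |(1 - α) * v| + 1 :=
    ((continuous_abs.tendsto _).comp (tendsto_theta_shift_sub_theta hψ hθ hv)).eventually
      (eventually_le_nhds (lt_add_one _))
  have hI := tendsto_integral_exp_sub_integral_exp hε_meas hε hθ (hθ.comp hy) hgap
  have hlim := ((hc.comp hy).div hc hc₀).mul ((continuous_exp.tendsto 0).comp hI)
  rw [div_self hc₀, exp_zero, mul_one] at hlim
  refine hlim.congr' ?_
  filter_upwards [eventually_ge_atTop 1, hy.eventually_ge_atTop 1] with x hx hyx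
  simp only [Function.comp_apply, Pi.div_apply]
  rw [hrep x hx, hrep _ hyx, mul_div_mul_comm, ← exp_sub]

theorem psi_lcf_integral_representation_theta_general (ψ g : ℝ → ℝ) (α : ℝ) (hα : α < 1)
    (hψ_cont : Continuous ψ) (hψ_one : ∀ x, 1 ≤ ψ x)
    (hθ_mono : StrictMonoOn (fun x => x / ψ x) (Set.Ici 1))
    (hθ_top : Tendsto (fun x => x / ψ x) atTop atTop)
    (hψ_smooth : ∀ v : ℝ,
      (fun x => ψ (x + v * ψ x) - ψ x - α * v * (ψ x) ^ 2 / x)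
        =o[atTop] (fun x => (ψ x) ^ 2 / x))
    (hg_pos : ∀ x, 0 < g x) (hg_meas : Measurable g) :
    (∀ v : ℝ, Tendsto (fun x => g (x + v * ψ x) / g x) atTop (𝓝 1)) ↔
      ∃ (c ε : ℝ → ℝ) (c₀ : ℝ), Measurable c ∧ Measurable ε ∧
        (∀ t, 0 < c t) ∧ 0 < c₀ ∧
        Tendsto c atTop (𝓝 c₀) ∧ Tendsto ε atTop (𝓝 0) ∧
        ∀ x ≥ (1 : ℝ),
          g x = c x * Real.exp (∫ t in (1:ℝ)..(Real.exp (x / ψ x)), ε t / t) := by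
  have hψ : ∀ x, 0 < ψ x := fun x => one_pos.trans_le (hψ_one x)
  constructor
  · exact exists_integral_representation_of_tendsto_shift_div hα hψ_cont hψ hθ_mono hθ_top
      hψ_smooth hg_pos hg_meas
  · rintro ⟨c, ε, c₀, -, hε_meas, -, hc₀, hc, hε, hrep⟩ v
    exact tendsto_shift_div_of_integral_representation hψ hθ_top (hψ_smooth v) hε_meas hc
      hc₀.ne' hε hrep

/-- Integral representation theorem for `ψ`-l.c.f.'s with `ψ ∈ 𝒦₁`,
with `θ(x) = x/ψ(x)` in place of `γ(x)`. -/
theorem psi_lcf_integral_representation_theta (ψ L g : ℝ → ℝ) (α : ℝ) (hα : α < 1)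
    (hψ_cont : Continuous ψ) (hψ_one : ∀ x, 1 ≤ ψ x)
    (hL_pos : ∀ x, 0 < x → 0 < L x)
    (hL_slow : ∀ u : ℝ, 0 < u → Tendsto (fun x => L (u * x) / L x) atTop (𝓝 1))
    (hψ_rv : ∀ x, 0 < x → ψ x = x ^ α * L x)
    (hθ_mono : StrictMonoOn (fun x => x / ψ x) (Set.Ici 1))
    (hθ_top : Tendsto (fun x => x / ψ x) atTop atTop)
    (hψ_smooth : ∀ v : ℝ,
      (fun x => ψ (x + v * ψ x) - ψ x - α * v * (ψ x) ^ 2 / x)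
        =o[atTop] (fun x => (ψ x) ^ 2 / x))
    (hg_pos : ∀ x, 0 < g x) (hg_meas : Measurable g) :
    (∀ v : ℝ, Tendsto (fun x => g (x + v * ψ x) / g x) atTop (𝓝 1)) ↔
      ∃ (c ε : ℝ → ℝ) (c₀ : ℝ), Measurable c ∧ Measurable ε ∧
        (∀ t, 0 < c t) ∧ 0 < c₀ ∧
        Tendsto c atTop (𝓝 c₀) ∧ Tendsto ε atTop (𝓝 0) ∧
        ∀ x ≥ (1 : ℝ),
          g x = c x * Real.exp (∫ t in (1:ℝ)..(Real.exp (x / ψ x)), ε t / t) :=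
  psi_lcf_integral_representation_theta_general ψ g α hα hψ_cont hψ_one hθ_mono hθ_top hψ_smooth
    hg_pos hg_meas
end
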